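/- Let s ≥ 2 and n ≥ 1. There is a bijection between F'(s,n) and F(s,n); in particular |F'(s,n)| = |F(s,n)|, where F'(s,n) is the set of color-respecting non-crossing perfect matchings of 2(s-1)n colored points on the boundary of a disc and F(s,n) is the set of partitions of sn cyclic points into n pairwise non-crossing blocks of size s. -/

import Mathlib

/-- `b` lies strictly between `a` and `c` in the anticlockwise cyclic order on `Fin m`. -/
def CBtw {m : ℕ} (a b c : Fin m) : Prop :=
  0 < (b - a).val ∧ (b - a).val < (c - a).val

/-- Two subsets of the cyclic points cross: some of their points strictly alternate
in the cyclic order. -/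
def CrossSets {m : ℕ} (A B : Finset (Fin m)) : Prop :=
  ∃ a ∈ A, ∃ a' ∈ A, ∃ b ∈ B, ∃ b' ∈ B, CBtw a b a' ∧ CBtw a' b' a

/-- The boundary arc joining point `a` to point `a+1` lies inside the sector going
anticlockwise from `x` to `y`. -/
def ArcIn {m : ℕ} (x a y : Fin m) : Prop :=
  (a - x).val < (y - x).val

/-- The block `B` (i.e. the corresponding spider) separates the boundary arcs `a` and `b`. -/
def Separates {m : ℕ} (B : Finset (Fin m)) (a b : Fin m) : Prop :=
  ∃ x ∈ B, ∃ y ∈ B, ArcIn x a y ∧ ArcIn y b x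

/-- The boundary arcs `a` and `b` lie in the same region of the subdivision of the
disc determined by the spiders corresponding to the blocks of `C`. -/
def SameFace {m : ℕ} (C : Finset (Finset (Fin m))) (a b : Fin m) : Prop :=
  ∀ B ∈ C, ¬ Separates B a b

/-- The regions (faces) of the subdivision of the disc determined by the spiders
corresponding to `C`, each region identified with the set of boundary arcs it touches. -/
def Faces {m : ℕ} (C : Finset (Finset (Fin m))) : Set (Set (Fin m)) :=
  {S | ∃ a, S = {b | SameFace C a b}}

/-- A configuration of `n` non-intersecting `s`-spiders in the disc, combinatorially:
a partition of the `sn` cyclic boundary points into `n` pairwise non-crossing blocks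
of size `s`. -/
def IsSpiderConfig (s n : ℕ) (P : Finset (Finset (Fin (s * n)))) : Prop :=
  P.card = n ∧ (∀ B ∈ P, B.card = s) ∧
  (∀ B ∈ P, ∀ B' ∈ P, B ≠ B' → Disjoint B B') ∧
  (∀ x : Fin (s * n), ∃ B ∈ P, x ∈ B) ∧
  (∀ B ∈ P, ∀ B' ∈ P, B ≠ B' → ¬ CrossSets B B')

/-- The color of the `p`-th of the `2(s-1)n` cyclic points: the points come in `2n`
consecutive blocks of `s-1` points each; odd-numbered blocks are colored `1,…,s-1`
in cyclic order and even-numbered blocks are colored `s-1,…,1`. -/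
def ptColor (s p : ℕ) : ℕ :=
  if (p / (s - 1)) % 2 = 0 then p % (s - 1) + 1 else (s - 1) - p % (s - 1)

/-- A complete pairing: a non-crossing perfect matching of the `2(s-1)n` colored
cyclic points joining points of equal colors. -/
def IsPairing (s n : ℕ) (M : Finset (Finset (Fin (2 * (s - 1) * n)))) : Prop :=
  (∀ e ∈ M, ∃ a b : Fin (2 * (s - 1) * n),
      e = {a, b} ∧ a ≠ b ∧ ptColor s (a : ℕ) = ptColor s (b : ℕ)) ∧
  (∀ e ∈ M, ∀ e' ∈ M, e ≠ e' → Disjoint e e') ∧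
  (∀ x : Fin (2 * (s - 1) * n), ∃ e ∈ M, x ∈ e) ∧
  (∀ e ∈ M, ∀ e' ∈ M, e ≠ e' → ¬ CrossSets e e')

/-- A collection of `i` pairwise disjoint, pairwise non-crossing `s`-element blocks of
the `sn` cyclic points which extends to a partition of all the points into `n` pairwise
non-crossing `s`-blocks (a completable configuration of `i` non-intersecting spiders). -/
def IsCompletable (s n i : ℕ) (C : Finset (Finset (Fin (s * n)))) : Prop :=
  C.card = i ∧ (∀ B ∈ C, B.card = s) ∧
  (∀ B ∈ C, ∀ B' ∈ C, B ≠ B' → Disjoint B B' ∧ ¬ CrossSets B B') ∧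
  ∃ P, IsSpiderConfig s n P ∧ C ⊆ P


/-! ### Auxiliary development for the proof -/

namespace SpiderBij

open Finset
open scoped Classical

/-- Linear crossing pattern: points of `A` and `B` alternate as `p < q < r < t`
with `p, r ∈ A` and `q, t ∈ B`. -/
def LinCross (A B : Finset ℕ) : Prop :=
  ∃ p ∈ A, ∃ r ∈ A, ∃ q ∈ B, ∃ t ∈ B, p < q ∧ q < r ∧ r < t

/-- Linear spider-type structures: partitions of `[a, b)` into pairwise
noncrossing blocks, all of size `s` except the block containing `a`, of size `j`. -/
def IsT (s j a b : ℕ) (P : Finset (Finset ℕ)) : Prop :=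
  (∀ x : ℕ, x ∈ Finset.Ico a b ↔ ∃ B ∈ P, x ∈ B) ∧
  (∀ B ∈ P, ∀ B' ∈ P, B ≠ B' → Disjoint B B') ∧
  (∀ B ∈ P, (a ∈ B → B.card = j) ∧ (a ∉ B → B.card = s)) ∧
  (∀ B ∈ P, ∀ B' ∈ P, B ≠ B' → ¬ LinCross B B')

/-- Linear pairing structures on `[a, b)` with chord-sum condition mod `κ`. -/
def IsPr (κ a b : ℕ) (M : Finset (Finset ℕ)) : Prop :=
  (∀ e ∈ M, ∃ x ∈ e, ∃ y ∈ e, x < y ∧ (x + y + 1) % κ = 0 ∧ e = {x, y}) ∧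
  (∀ x : ℕ, x ∈ Finset.Ico a b ↔ ∃ e ∈ M, x ∈ e) ∧
  (∀ e ∈ M, ∀ e' ∈ M, e ≠ e' → Disjoint e e') ∧
  (∀ e ∈ M, ∀ e' ∈ M, e ≠ e' → ¬ LinCross e e')

noncomputable def Tfin (s j a b : ℕ) : Finset (Finset (Finset ℕ)) :=
  ((Finset.Ico a b).powerset.powerset).filter (fun P => IsT s j a b P)

noncomputable def Pfin (κ a b : ℕ) : Finset (Finset (Finset ℕ)) :=
  ((Finset.Ico a b).powerset.powerset).filter (fun M => IsPr κ a b M)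

lemma mem_Tfin {s j a b : ℕ} {P : Finset (Finset ℕ)} :
    P ∈ Tfin s j a b ↔ IsT s j a b P := by
  constructor
  · exact fun h => (mem_filter.mp h).2
  · intro h
    refine mem_filter.mpr ⟨mem_powerset.mpr fun B hB => mem_powerset.mpr fun x hx => ?_, h⟩
    exact (h.1 x).mpr ⟨B, hB, hx⟩

lemma mem_Pfin {κ a b : ℕ} {M : Finset (Finset ℕ)} :
    M ∈ Pfin κ a b ↔ IsPr κ a b M := by
  constructor
  · exact fun h => (mem_filter.mp h).2
  · intro h
    refine mem_filter.mpr ⟨mem_powerset.mpr fun e he => mem_powerset.mpr fun x hx => ?_, h⟩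
    exact (h.2.1 x).mpr ⟨e, he, hx⟩

/-- counting functions -/
noncomputable def gcount (s t : ℕ) : ℕ := (Tfin s s 0 (s * t)).card
noncomputable def vcount (s j t : ℕ) : ℕ := (Tfin s j 0 (j + s * t)).card

/-! #### Base cases -/

lemma Tfin_nil {s j a : ℕ} (hs : 1 ≤ s) : Tfin s j a a = {∅} := by
  ext P
  rw [mem_Tfin, Finset.mem_singleton]
  constructor
  · rintro ⟨hcov, _, hsz, _⟩
    rw [Finset.eq_empty_iff_forall_notMem]
    intro B hB
    rcases Finset.eq_empty_or_nonempty B with hBe | ⟨x, hx⟩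
    · have := (hsz B hB).2 (by simp [hBe])
      simp [hBe] at this; omega
    · have := (hcov x).mpr ⟨B, hB, hx⟩
      simp at this
  · rintro rfl
    refine ⟨fun x => ?_, by simp, by simp, by simp⟩
    simp

lemma Pfin_nil {κ a : ℕ} : Pfin κ a a = {∅} := by
  ext M
  rw [mem_Pfin, Finset.mem_singleton]
  constructor
  · rintro ⟨hsh, hcov, _, _⟩
    rw [Finset.eq_empty_iff_forall_notMem]
    intro e he
    obtain ⟨x, hx, _⟩ := hsh e he
    have := (hcov x).mpr ⟨e, he, hx⟩
    simp at this
  · rintro rfl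
    refine ⟨by simp, fun x => ?_, by simp, by simp⟩
    simp

lemma gcount_zero {s : ℕ} (hs : 1 ≤ s) : gcount s 0 = 1 := by
  simp [gcount, Tfin_nil hs]

/-! #### Translation invariance -/

def shE (c : ℕ) : ℕ ↪ ℕ := ⟨fun x => x + c, fun x y h => Nat.add_right_cancel h⟩

def shB (c : ℕ) : Finset ℕ ↪ Finset ℕ := ⟨fun B => B.map (shE c), Finset.map_injective _⟩

lemma mem_shB {c x : ℕ} {B : Finset ℕ} : x ∈ (shB c) B ↔ ∃ y ∈ B, y + c = x := by
  simp only [shB, shE, Function.Embedding.coeFn_mk, Finset.mem_map]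
  exact Iff.rfl

lemma linCross_shB {c : ℕ} {A B : Finset ℕ} :
    LinCross ((shB c) A) ((shB c) B) ↔ LinCross A B := by
  constructor
  · rintro ⟨p, hp, r, hr, q, hq, t, ht, h1, h2, h3⟩
    obtain ⟨p', hp', rfl⟩ := mem_shB.mp hp
    obtain ⟨r', hr', rfl⟩ := mem_shB.mp hr
    obtain ⟨q', hq', rfl⟩ := mem_shB.mp hq
    obtain ⟨t', ht', rfl⟩ := mem_shB.mp ht
    exact ⟨p', hp', r', hr', q', hq', t', ht', by omega, by omega, by omega⟩
  · rintro ⟨p, hp, r, hr, q, hq, t, ht, h1, h2, h3⟩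
    exact ⟨p + c, mem_shB.mpr ⟨p, hp, rfl⟩, r + c, mem_shB.mpr ⟨r, hr, rfl⟩,
      q + c, mem_shB.mpr ⟨q, hq, rfl⟩, t + c, mem_shB.mpr ⟨t, ht, rfl⟩,
      by omega, by omega, by omega⟩

lemma IsT_shift {s j a b c : ℕ} {P : Finset (Finset ℕ)} (h : IsT s j a b P) :
    IsT s j (a + c) (b + c) (P.map (shB c)) := by
  obtain ⟨hcov, hdis, hsz, hnc⟩ := h
  refine ⟨fun x => ?_, ?_, ?_, ?_⟩
  · constructor
    · intro hx
      simp only [Finset.mem_Ico] at hx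
      obtain ⟨B, hB, hxB⟩ := (hcov (x - c)).mp (by simp [Finset.mem_Ico]; omega)
      exact ⟨(shB c) B, Finset.mem_map_of_mem _ hB, mem_shB.mpr ⟨x - c, hxB, by omega⟩⟩
    · rintro ⟨B', hB', hxB'⟩
      obtain ⟨B, hB, rfl⟩ := Finset.mem_map.mp hB'
      obtain ⟨y, hy, rfl⟩ := mem_shB.mp hxB'
      have := (hcov y).mpr ⟨B, hB, hy⟩
      simp only [Finset.mem_Ico] at this ⊢
      omega
  · intro B1 hB1 B2 hB2 hne
    obtain ⟨C1, hC1, rfl⟩ := Finset.mem_map.mp hB1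
    obtain ⟨C2, hC2, rfl⟩ := Finset.mem_map.mp hB2
    have : C1 ≠ C2 := fun h => hne (by rw [h])
    simpa [shB] using Finset.disjoint_map (shE c) |>.mpr (hdis C1 hC1 C2 hC2 this)
  · intro B' hB'
    obtain ⟨B, hB, rfl⟩ := Finset.mem_map.mp hB'
    have hmem : a + c ∈ (shB c) B ↔ a ∈ B := by
      rw [mem_shB]
      constructor
      · rintro ⟨y, hy, hyc⟩; have : y = a := by omega
        rwa [← this]
      · intro ha; exact ⟨a, ha, rfl⟩
    have hcard : ((shB c) B).card = B.card := by simp [shB]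
    constructor
    · intro ha; rw [hcard]; exact (hsz B hB).1 (hmem.mp ha)
    · intro ha; rw [hcard]; exact (hsz B hB).2 (fun h => ha (hmem.mpr h))
  · intro B1 hB1 B2 hB2 hne
    obtain ⟨C1, hC1, rfl⟩ := Finset.mem_map.mp hB1
    obtain ⟨C2, hC2, rfl⟩ := Finset.mem_map.mp hB2
    have : C1 ≠ C2 := fun h => hne (by rw [h])
    rw [linCross_shB]
    exact hnc C1 hC1 C2 hC2 this

lemma IsT_unshift {s j a b c : ℕ} {Q : Finset (Finset ℕ)} (h : IsT s j (a + c) (b + c) Q) :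
    ∃ P, IsT s j a b P ∧ P.map (shB c) = Q := by
  have hge : ∀ B ∈ Q, ∀ x ∈ B, a + c ≤ x ∧ x < b + c := by
    intro B hB x hx
    have := (h.1 x).mpr ⟨B, hB, hx⟩
    simpa [Finset.mem_Ico] using this
  refine ⟨Q.image (fun B => B.image (fun x => x - c)), ?_, ?_⟩
  · have hround : ∀ B ∈ Q, (shB c) (B.image (fun x => x - c)) = B := by
      intro B hB
      ext x
      rw [mem_shB]
      constructor
      · rintro ⟨y, hy, rfl⟩
        obtain ⟨z, hz, rfl⟩ := Finset.mem_image.mp hy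
        have := hge B hB z hz
        have hzc : z - c + c = z := by omega
        rwa [hzc]
      · intro hx
        exact ⟨x - c, Finset.mem_image_of_mem _ hx, by have := hge B hB x hx; omega⟩
    have hQ : Q = (Q.image (fun B => B.image (fun x => x - c))).map (shB c) := by
      ext B
      rw [Finset.mem_map]
      constructor
      · intro hB
        exact ⟨B.image (fun x => x - c), Finset.mem_image_of_mem _ hB, hround B hB⟩
      · rintro ⟨C, hC, rfl⟩
        obtain ⟨B, hB, rfl⟩ := Finset.mem_image.mp hC
        rw [hround B hB]; exact hB
    rw [hQ] at h
    -- now transfer back using injectivity of shifting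
    obtain ⟨hcov, hdis, hsz, hnc⟩ := h
    set P := Q.image (fun B => B.image (fun x => x - c)) with hP
    refine ⟨fun x => ?_, ?_, ?_, ?_⟩
    · constructor
      · intro hx
        simp only [Finset.mem_Ico] at hx
        obtain ⟨B', hB', hxB'⟩ := (hcov (x + c)).mp (by simp [Finset.mem_Ico]; omega)
        obtain ⟨B, hB, rfl⟩ := Finset.mem_map.mp hB'
        obtain ⟨y, hy, hyc⟩ := mem_shB.mp hxB'
        have : y = x := by omega
        exact ⟨B, hB, by rwa [← this]⟩
      · rintro ⟨B, hB, hxB⟩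
        have := (hcov (x + c)).mpr ⟨(shB c) B, Finset.mem_map_of_mem _ hB,
          mem_shB.mpr ⟨x, hxB, rfl⟩⟩
        simp only [Finset.mem_Ico] at this ⊢
        omega
    · intro B1 hB1 B2 hB2 hne
      have := hdis ((shB c) B1) (Finset.mem_map_of_mem _ hB1)
        ((shB c) B2) (Finset.mem_map_of_mem _ hB2)
        (fun hcon => hne ((shB c).injective hcon))
      rw [Finset.disjoint_left] at this ⊢
      intro x hx1 hx2
      exact this (mem_shB.mpr ⟨x, hx1, rfl⟩) (mem_shB.mpr ⟨x, hx2, rfl⟩)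
    · intro B hB
      have hs' := hsz ((shB c) B) (Finset.mem_map_of_mem _ hB)
      have hmem : a + c ∈ (shB c) B ↔ a ∈ B := by
        rw [mem_shB]
        constructor
        · rintro ⟨y, hy, hyc⟩; have : y = a := by omega
          rwa [← this]
        · intro ha; exact ⟨a, ha, rfl⟩
      have hcard : ((shB c) B).card = B.card := by simp [shB]
      constructor
      · intro ha; rw [← hcard]; exact hs'.1 (hmem.mpr ha)
      · intro ha; rw [← hcard]; exact hs'.2 (fun hcon => ha (hmem.mp hcon))
    · intro B1 hB1 B2 hB2 hne
      have := hnc ((shB c) B1) (Finset.mem_map_of_mem _ hB1)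
        ((shB c) B2) (Finset.mem_map_of_mem _ hB2)
        (fun hcon => hne ((shB c).injective hcon))
      rw [linCross_shB] at this
      exact this
  · ext B
    rw [Finset.mem_map]
    constructor
    · rintro ⟨C, hC, rfl⟩
      obtain ⟨B0, hB0, rfl⟩ := Finset.mem_image.mp hC
      have hround : (shB c) (B0.image (fun x => x - c)) = B0 := by
        ext x
        rw [mem_shB]
        constructor
        · rintro ⟨y, hy, rfl⟩
          obtain ⟨z, hz, rfl⟩ := Finset.mem_image.mp hy
          have := (h.1 z).mpr ⟨B0, hB0, hz⟩
          simp only [Finset.mem_Ico] at this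
          have hzc : z - c + c = z := by omega
          rwa [hzc]
        · intro hx
          have := (h.1 x).mpr ⟨B0, hB0, hx⟩
          simp only [Finset.mem_Ico] at this
          exact ⟨x - c, Finset.mem_image_of_mem _ hx, by omega⟩
      rw [hround]; exact hB0
    · intro hB
      refine ⟨B.image (fun x => x - c), Finset.mem_image_of_mem _ hB, ?_⟩
      ext x
      rw [mem_shB]
      constructor
      · rintro ⟨y, hy, rfl⟩
        obtain ⟨z, hz, rfl⟩ := Finset.mem_image.mp hy
        have := (h.1 z).mpr ⟨B, hB, hz⟩
        simp only [Finset.mem_Ico] at this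
        have hzc : z - c + c = z := by omega
        rwa [hzc]
      · intro hx
        have := (h.1 x).mpr ⟨B, hB, hx⟩
        simp only [Finset.mem_Ico] at this
        exact ⟨x - c, Finset.mem_image_of_mem _ hx, by omega⟩

lemma Tfin_card_shift (s j a b c : ℕ) :
    (Tfin s j (a + c) (b + c)).card = (Tfin s j a b).card := by
  symm
  apply Finset.card_bij (fun P _ => P.map (shB c))
  · intro P hP
    exact mem_Tfin.mpr (IsT_shift (mem_Tfin.mp hP))
  · intro P1 h1 P2 h2 heq
    exact Finset.map_injective _ heq
  · intro Q hQ
    obtain ⟨P, hP, hPQ⟩ := IsT_unshift (mem_Tfin.mp hQ)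
    exact ⟨P, mem_Tfin.mpr hP, hPQ⟩

/-! #### Length constraints -/

lemma IsT_biUnion {s j a b : ℕ} {P : Finset (Finset ℕ)} (h : IsT s j a b P) :
    Finset.Ico a b = P.biUnion id := by
  ext x
  rw [Finset.mem_biUnion]
  exact (h.1 x).trans (by simp)

lemma IsT_length {s j a b : ℕ} {P : Finset (Finset ℕ)} (hj : 1 ≤ j) (hab : a < b)
    (h : IsT s j a b P) : ∃ t, b - a = j + s * t := by
  obtain ⟨D, hD, haD⟩ := (h.1 a).mp (by simp [hab])
  have hcard : b - a = ∑ B ∈ P, B.card := by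
    have h1 : (Finset.Ico a b).card = (P.biUnion id).card := by rw [IsT_biUnion h]
    rw [Nat.card_Ico] at h1
    rw [h1]
    exact Finset.card_biUnion (fun B hB B' hB' hne => h.2.1 B hB B' hB' hne)
  have hc : ∀ B ∈ P.erase D, B.card = s := by
    intro B hB
    have hBP := Finset.mem_of_mem_erase hB
    have hne := Finset.ne_of_mem_erase hB
    refine (h.2.2.1 B hBP).2 (fun haB => ?_)
    exact (Finset.disjoint_left.mp (h.2.1 B hBP D hD hne) haB) haD
  have hsum : ∑ B ∈ P, B.card = j + s * (P.erase D).card := by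
    rw [← Finset.sum_erase_add P _ hD, (h.2.2.1 D hD).1 haD,
      Finset.sum_congr rfl hc, Finset.sum_const, smul_eq_mul]
    ring
  exact ⟨(P.erase D).card, by omega⟩

lemma Tfin_card_of_no_length {s j a b : ℕ} (hj : 1 ≤ j) (hab : a < b)
    (h : ¬ ∃ t, b - a = j + s * t) : (Tfin s j a b).card = 0 := by
  rw [Finset.card_eq_zero, Finset.eq_empty_iff_forall_notMem]
  exact fun P hP => h (IsT_length hj hab (mem_Tfin.mp hP))

/-! #### Peeling recurrences -/

lemma blockOfMin_singleton {s a b : ℕ} {P : Finset (Finset ℕ)} (hab : a < b)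
    (h : IsT s 1 a b P) : {a} ∈ P := by
  obtain ⟨D, hD, haD⟩ := (h.1 a).mp (by simp [Finset.mem_Ico]; omega)
  have hcard := (h.2.2.1 D hD).1 haD
  have : D = {a} := by
    obtain ⟨x, hx⟩ := Finset.card_eq_one.mp hcard
    rw [hx] at haD ⊢
    simp at haD
    rw [haD]
  rwa [← this]

lemma T1_peel {s a b : ℕ} (hs : 2 ≤ s) (hab : a < b) :
    (Tfin s 1 a b).card = (Tfin s s (a + 1) b).card := by
  apply Finset.card_bij (fun P _ => P.erase {a})
  · intro P hP
    have h := mem_Tfin.mp hP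
    have hsing := blockOfMin_singleton hab h
    apply mem_Tfin.mpr
    have hnota : ∀ B ∈ P, B ≠ {a} → a ∉ B := by
      intro B hB hne haB
      exact (Finset.disjoint_left.mp (h.2.1 B hB {a} hsing hne) haB) (by simp)
    refine ⟨fun x => ?_, ?_, ?_, ?_⟩
    · constructor
      · intro hx
        simp only [Finset.mem_Ico] at hx
        obtain ⟨B, hB, hxB⟩ := (h.1 x).mp (by simp [Finset.mem_Ico]; omega)
        refine ⟨B, Finset.mem_erase.mpr ⟨fun hcon => ?_, hB⟩, hxB⟩
        rw [hcon] at hxB; simp at hxB; omega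
      · rintro ⟨B, hB, hxB⟩
        have hBP := Finset.mem_of_mem_erase hB
        have hne := Finset.ne_of_mem_erase hB
        have hxa : x ≠ a := fun hcon => (hnota B hBP hne) (hcon ▸ hxB)
        have := (h.1 x).mpr ⟨B, hBP, hxB⟩
        simp only [Finset.mem_Ico] at this ⊢
        omega
    · intro B1 h1 B2 h2 hne
      exact h.2.1 B1 (Finset.mem_of_mem_erase h1) B2 (Finset.mem_of_mem_erase h2) hne
    · intro B hB
      have hBP := Finset.mem_of_mem_erase hB
      have hne := Finset.ne_of_mem_erase hB
      have hcard := (h.2.2.1 B hBP).2 (hnota B hBP hne)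
      exact ⟨fun _ => hcard, fun _ => hcard⟩
    · intro B1 h1 B2 h2 hne
      exact h.2.2.2 B1 (Finset.mem_of_mem_erase h1) B2 (Finset.mem_of_mem_erase h2) hne
  · intro P1 h1 P2 h2 heq
    have e1 := blockOfMin_singleton hab (mem_Tfin.mp h1)
    have e2 := blockOfMin_singleton hab (mem_Tfin.mp h2)
    rw [← Finset.insert_erase e1, ← Finset.insert_erase e2, heq]
  · intro Q hQ
    have h := mem_Tfin.mp hQ
    have hnota : ∀ B ∈ Q, a ∉ B := by
      intro B hB haB
      have := (h.1 a).mpr ⟨B, hB, haB⟩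
      simp [Finset.mem_Ico] at this
    have hQa : {a} ∉ Q := fun hcon => hnota {a} hcon (by simp)
    refine ⟨insert {a} Q, mem_Tfin.mpr ?_, by rw [Finset.erase_insert hQa]⟩
    refine ⟨fun x => ?_, ?_, ?_, ?_⟩
    · constructor
      · intro hx
        simp only [Finset.mem_Ico] at hx
        by_cases hxa : x = a
        · exact ⟨{a}, Finset.mem_insert_self _ _, by simp [hxa]⟩
        · obtain ⟨B, hB, hxB⟩ := (h.1 x).mp (by simp [Finset.mem_Ico]; omega)
          exact ⟨B, Finset.mem_insert_of_mem hB, hxB⟩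
      · rintro ⟨B, hB, hxB⟩
        rcases Finset.mem_insert.mp hB with rfl | hB'
        · simp at hxB
          simp [Finset.mem_Ico]; omega
        · have := (h.1 x).mpr ⟨B, hB', hxB⟩
          simp only [Finset.mem_Ico] at this ⊢
          omega
    · intro B1 h1 B2 h2 hne
      rcases Finset.mem_insert.mp h1 with rfl | h1' <;>
        rcases Finset.mem_insert.mp h2 with rfl | h2'
      · exact absurd rfl hne
      · simp only [Finset.disjoint_left]
        intro x hx; simp at hx; subst hx; exact hnota B2 h2'
      · simp only [Finset.disjoint_right]
        intro x hx; simp at hx; subst hx; exact hnota B1 h1'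
      · exact h.2.1 B1 h1' B2 h2' hne
    · intro B hB
      rcases Finset.mem_insert.mp hB with rfl | hB'
      · exact ⟨fun _ => by simp, fun hcon => absurd (by simp : a ∈ ({a} : Finset ℕ)) hcon⟩
      · have : B.card = s := by
          rcases Classical.em ((a+1) ∈ B) with hm | hm
          · exact (h.2.2.1 B hB').1 hm
          · exact (h.2.2.1 B hB').2 hm
        exact ⟨fun hcon => absurd hcon (hnota B hB'), fun _ => this⟩
    · intro B1 h1 B2 h2 hne
      have hsing1 : ∀ B ∈ Q, ¬ LinCross {a} B := by
        rintro B hB ⟨p, hp, r, hr, q, hq, t, ht, o1, o2, o3⟩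
        simp at hp hr; omega
      have hsing2 : ∀ B ∈ Q, ¬ LinCross B {a} := by
        rintro B hB ⟨p, hp, r, hr, q, hq, t, ht, o1, o2, o3⟩
        simp at hq ht; omega
      rcases Finset.mem_insert.mp h1 with rfl | h1' <;>
        rcases Finset.mem_insert.mp h2 with rfl | h2'
      · exact absurd rfl hne
      · exact hsing1 B2 h2'
      · exact hsing2 B1 h1'
      · exact h.2.2.2 B1 h1' B2 h2' hne

lemma IsT_elem_mem {s j a b : ℕ} {P : Finset (Finset ℕ)} (h : IsT s j a b P) :
    ∀ B ∈ P, ∀ x ∈ B, a ≤ x ∧ x < b := by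
  intro B hB x hx
  have := (h.1 x).mpr ⟨B, hB, hx⟩
  simpa [Finset.mem_Ico] using this

lemma exists_secondmin {s j a b : ℕ} {P : Finset (Finset ℕ)} (hj : 2 ≤ j) (hab : a < b)
    (h : IsT s j a b P) :
    ∃ D ∈ P, a ∈ D ∧ ∃ d, d ∈ D ∧ a < d ∧ d < b ∧ (∀ x ∈ D, x ≠ a → d ≤ x) := by
  obtain ⟨D, hD, haD⟩ := (h.1 a).mp (by simp [Finset.mem_Ico]; omega)
  have hDcard : D.card = j := (h.2.2.1 D hD).1 haD
  have hne : (D.erase a).Nonempty := by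
    rw [← Finset.card_pos, Finset.card_erase_of_mem haD]
    omega
  set d := (D.erase a).min' hne with hd
  have hdmem : d ∈ D.erase a := Finset.min'_mem _ hne
  have hdD : d ∈ D := Finset.mem_of_mem_erase hdmem
  have hdne : d ≠ a := Finset.ne_of_mem_erase hdmem
  have hdb := IsT_elem_mem h D hD d hdD
  refine ⟨D, hD, haD, d, hdD, by omega, hdb.2, ?_⟩
  intro x hx hxa
  exact Finset.min'_le _ x (Finset.mem_erase.mpr ⟨hxa, hx⟩)

lemma IsT_straddle {s j a b d : ℕ} {P : Finset (Finset ℕ)} {D : Finset ℕ}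
    (h : IsT s j a b P) (hD : D ∈ P) (haD : a ∈ D) (hdD : d ∈ D) (had : a < d)
    (hmin : ∀ x ∈ D, x ≠ a → d ≤ x) :
    ∀ B ∈ P, B ≠ D → ((∀ x ∈ B, a < x ∧ x < d) ∨ (∀ x ∈ B, d < x ∧ x < b)) := by
  intro B hB hne
  have hdisj := h.2.1 B hB D hD hne
  have hnotin : ∀ x ∈ B, x ≠ a ∧ x ≠ d := by
    intro x hx
    constructor <;> intro hcon <;> subst hcon
    · exact (Finset.disjoint_left.mp hdisj hx) haD
    · exact (Finset.disjoint_left.mp hdisj hx) hdD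
  have hbnd := IsT_elem_mem h B hB
  have hnc := h.2.2.2 D hD B hB (fun hcon => hne hcon.symm)
  have hkey : ¬ ∃ x ∈ B, ∃ y ∈ B, x < d ∧ d < y := by
    rintro ⟨x, hx, y, hy, h1, h2⟩
    have hxa := (hnotin x hx).1
    have hxbnd := hbnd x hx
    exact hnc ⟨a, haD, d, hdD, x, hx, y, hy, by omega, h1, h2⟩
  by_cases hex : ∃ y ∈ B, d < y
  · right
    intro x hx
    have := hnotin x hx
    have := hbnd x hx
    obtain ⟨y, hy, hdy⟩ := hex
    have hxd : ¬ x < d := fun hcon => hkey ⟨x, hx, y, hy, hcon, hdy⟩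
    omega
  · left
    intro x hx
    have := hnotin x hx
    have := hbnd x hx
    have : ¬ d < x := fun hcon => hex ⟨x, hx, hcon⟩
    omega

/-- the block containing `a`, as a function of the partition -/
noncomputable def ablock (a : ℕ) (P : Finset (Finset ℕ)) : Finset ℕ :=
  P.biUnion (fun B => if a ∈ B then B else ∅)

lemma ablock_eq {s j a b : ℕ} {P : Finset (Finset ℕ)} {D : Finset ℕ}
    (h : IsT s j a b P) (hD : D ∈ P) (haD : a ∈ D) : ablock a P = D := by
  ext x
  rw [ablock, Finset.mem_biUnion]
  constructor
  · rintro ⟨B, hB, hxB⟩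
    by_cases haB : a ∈ B
    · rw [if_pos haB] at hxB
      by_cases hne : B = D
      · rwa [← hne]
      · exact absurd haD (Finset.disjoint_left.mp (h.2.1 B hB D hD hne) haB)
    · rw [if_neg haB] at hxB
      simp at hxB
  · intro hx
    exact ⟨D, hD, by rw [if_pos haD]; exact hx⟩

lemma T_peel {s j a b : ℕ} (hs : 2 ≤ s) (hj : 2 ≤ j) (hab : a < b) :
    (Tfin s j a b).card
      = ∑ d ∈ Finset.Ico (a + 1) b,
          (Tfin s s (a + 1) d).card * (Tfin s (j - 1) d b).card := by
  classical
  have hsplit : Tfin s j a b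
      = (Finset.Ico (a + 1) b).biUnion
          (fun d => (Tfin s j a b).filter
            (fun P => ∃ B ∈ P, a ∈ B ∧ d ∈ B ∧ ∀ x ∈ B, x ≠ a → d ≤ x)) := by
    ext P
    rw [Finset.mem_biUnion]
    constructor
    · intro hP
      obtain ⟨D, hD, haD, d, hdD, h1, h2, h3⟩ := exists_secondmin hj hab (mem_Tfin.mp hP)
      exact ⟨d, by simp [Finset.mem_Ico]; omega,
        Finset.mem_filter.mpr ⟨hP, D, hD, haD, hdD, h3⟩⟩
    · rintro ⟨d, _, hPf⟩
      exact (Finset.mem_filter.mp hPf).1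
  have hdisj : ∀ d ∈ Finset.Ico (a + 1) b, ∀ d' ∈ Finset.Ico (a + 1) b, d ≠ d' →
      Disjoint ((Tfin s j a b).filter
          (fun P => ∃ B ∈ P, a ∈ B ∧ d ∈ B ∧ ∀ x ∈ B, x ≠ a → d ≤ x))
        ((Tfin s j a b).filter
          (fun P => ∃ B ∈ P, a ∈ B ∧ d' ∈ B ∧ ∀ x ∈ B, x ≠ a → d' ≤ x)) := by
    intro d hd d' hd' hne
    simp only [Finset.mem_Ico] at hd hd'
    rw [Finset.disjoint_left]
    intro P hP1 hP2
    obtain ⟨B, hB, haB, hdB, hmin⟩ := (Finset.mem_filter.mp hP1).2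
    obtain ⟨B', hB', haB', hdB', hmin'⟩ := (Finset.mem_filter.mp hP2).2
    have h := mem_Tfin.mp (Finset.mem_filter.mp hP1).1
    have hBB : B = B' := by
      by_contra hcon
      exact (Finset.disjoint_left.mp (h.2.1 B hB B' hB' hcon) haB) haB'
    subst hBB
    have h1 := hmin d' hdB' (by omega)
    have h2 := hmin' d hdB (by omega)
    omega
  rw [hsplit, Finset.card_biUnion hdisj]
  refine Finset.sum_congr rfl (fun d hd => ?_)
  simp only [Finset.mem_Ico] at hd
  rw [← Finset.card_product]
  apply Finset.card_bij (fun P _ => (P.filter (fun B => ∀ x ∈ B, a < x ∧ x < d),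
    insert ((ablock a P).erase a) (P.filter (fun B => ∀ x ∈ B, d < x ∧ x < b))))
  · -- membership
    intro P hP
    have h := mem_Tfin.mp (Finset.mem_filter.mp hP).1
    obtain ⟨D, hD, haD, hdD, hmin⟩ := (Finset.mem_filter.mp hP).2
    have hDab : ablock a P = D := ablock_eq h hD haD
    have hstr := IsT_straddle h hD haD hdD (by omega) hmin
    have hDcard : D.card = j := (h.2.2.1 D hD).1 haD
    have hDelem := IsT_elem_mem h D hD
    rw [Finset.mem_product]
    constructor
    · apply mem_Tfin.mpr
      refine ⟨fun x => ?_, ?_, ?_, ?_⟩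
      · constructor
        · intro hx
          simp only [Finset.mem_Ico] at hx
          obtain ⟨B, hB, hxB⟩ := (h.1 x).mp (by simp [Finset.mem_Ico]; omega)
          have hBne : B ≠ D := by
            intro hcon; subst hcon
            have := hmin x hxB (by omega); omega
          rcases hstr B hB hBne with hc | hc
          · exact ⟨B, Finset.mem_filter.mpr ⟨hB, hc⟩, hxB⟩
          · have := hc x hxB; omega
        · rintro ⟨B, hB, hxB⟩
          have := (Finset.mem_filter.mp hB).2 x hxB
          simp [Finset.mem_Ico]; omega
      · intro B1 h1 B2 h2 hne
        exact h.2.1 B1 (Finset.mem_of_mem_filter _ h1) B2 (Finset.mem_of_mem_filter _ h2) hne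
      · intro B hB
        have hBP := Finset.mem_of_mem_filter _ hB
        have hcond := (Finset.mem_filter.mp hB).2
        have hnota : a ∉ B := fun hcon => by have := hcond a hcon; omega
        have : B.card = s := (h.2.2.1 B hBP).2 hnota
        exact ⟨fun _ => this, fun _ => this⟩
      · intro B1 h1 B2 h2 hne
        exact h.2.2.2 B1 (Finset.mem_of_mem_filter _ h1) B2 (Finset.mem_of_mem_filter _ h2) hne
    · apply mem_Tfin.mpr
      rw [hDab]
      have hDerase_mem : ∀ x ∈ D.erase a, d ≤ x ∧ x < b := by
        intro x hx
        have hxD := Finset.mem_of_mem_erase hx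
        have hxa := Finset.ne_of_mem_erase hx
        exact ⟨hmin x hxD hxa, (hDelem x hxD).2⟩
      have hDnotfil : D.erase a ∉ P.filter (fun B => ∀ x ∈ B, d < x ∧ x < b) := by
        intro hcon
        have := (Finset.mem_filter.mp hcon).2 d (Finset.mem_erase.mpr ⟨by omega, hdD⟩)
        omega
      refine ⟨fun x => ?_, ?_, ?_, ?_⟩
      · constructor
        · intro hx
          simp only [Finset.mem_Ico] at hx
          by_cases hxd : x = d
          · exact ⟨D.erase a, Finset.mem_insert_self _ _,
              Finset.mem_erase.mpr ⟨by omega, hxd ▸ hdD⟩⟩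
          · obtain ⟨B, hB, hxB⟩ := (h.1 x).mp (by simp [Finset.mem_Ico]; omega)
            by_cases hBne : B = D
            · subst hBne
              exact ⟨B.erase a, Finset.mem_insert_self _ _,
                Finset.mem_erase.mpr ⟨by omega, hxB⟩⟩
            · rcases hstr B hB hBne with hc | hc
              · have := hc x hxB; omega
              · exact ⟨B, Finset.mem_insert_of_mem (Finset.mem_filter.mpr ⟨hB, hc⟩), hxB⟩
        · rintro ⟨B, hB, hxB⟩
          simp only [Finset.mem_Ico]
          rcases Finset.mem_insert.mp hB with rfl | hB'
          · have := hDerase_mem x hxB; omega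
          · have := (Finset.mem_filter.mp hB').2 x hxB; omega
      · intro B1 h1 B2 h2 hne
        rcases Finset.mem_insert.mp h1 with rfl | h1' <;>
          rcases Finset.mem_insert.mp h2 with rfl | h2'
        · exact absurd rfl hne
        · have hB2P := Finset.mem_of_mem_filter _ h2'
          have hB2ne : B2 ≠ D := by
            rintro rfl
            have := (Finset.mem_filter.mp h2').2 a haD; omega
          have := h.2.1 B2 hB2P D hD hB2ne
          rw [Finset.disjoint_left]
          intro x hx1 hx2
          exact (Finset.disjoint_right.mp this (Finset.mem_of_mem_erase hx1)) hx2
        · have hB1P := Finset.mem_of_mem_filter _ h1'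
          have hB1ne : B1 ≠ D := by
            rintro rfl
            have := (Finset.mem_filter.mp h1').2 a haD; omega
          have := h.2.1 B1 hB1P D hD hB1ne
          rw [Finset.disjoint_left]
          intro x hx1 hx2
          exact (Finset.disjoint_left.mp this hx1) (Finset.mem_of_mem_erase hx2)
        · exact h.2.1 B1 (Finset.mem_of_mem_filter _ h1') B2 (Finset.mem_of_mem_filter _ h2') hne
      · intro B hB
        rcases Finset.mem_insert.mp hB with rfl | hB'
        · have : d ∈ D.erase a := Finset.mem_erase.mpr ⟨by omega, hdD⟩
          refine ⟨fun _ => ?_, fun hcon => absurd this hcon⟩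
          rw [Finset.card_erase_of_mem haD, hDcard]
        · have hcond := (Finset.mem_filter.mp hB').2
          have hBP := Finset.mem_of_mem_filter _ hB'
          have hnota : a ∉ B := fun hcon => by have := hcond a hcon; omega
          have hnotd : d ∉ B := fun hcon => by have := hcond d hcon; omega
          have : B.card = s := (h.2.2.1 B hBP).2 hnota
          exact ⟨fun hcon => absurd hcon hnotd, fun _ => this⟩
      · intro B1 h1 B2 h2 hne
        have hfilne : ∀ B ∈ P.filter (fun B => ∀ x ∈ B, d < x ∧ x < b), B ≠ D := by
          intro B hB hcon
          subst hcon
          have := (Finset.mem_filter.mp hB).2 a haD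
          omega
        rintro ⟨p, hp, r, hr, q, hq, t, ht, o1, o2, o3⟩
        rcases Finset.mem_insert.mp h1 with rfl | h1' <;>
          rcases Finset.mem_insert.mp h2 with rfl | h2'
        · exact hne rfl
        · have hB2P := Finset.mem_of_mem_filter _ h2'
          exact h.2.2.2 D hD B2 hB2P (Ne.symm (hfilne B2 h2'))
            ⟨p, Finset.mem_of_mem_erase hp, r, Finset.mem_of_mem_erase hr,
              q, hq, t, ht, o1, o2, o3⟩
        · have hB1P := Finset.mem_of_mem_filter _ h1'
          exact h.2.2.2 B1 hB1P D hD (hfilne B1 h1')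
            ⟨p, hp, r, hr, q, Finset.mem_of_mem_erase hq, t, Finset.mem_of_mem_erase ht,
              o1, o2, o3⟩
        · exact h.2.2.2 B1 (Finset.mem_of_mem_filter _ h1') B2 (Finset.mem_of_mem_filter _ h2')
            hne ⟨p, hp, r, hr, q, hq, t, ht, o1, o2, o3⟩
  · -- injectivity
    intro P1 hP1 P2 hP2 heq
    have h1 := mem_Tfin.mp (Finset.mem_filter.mp hP1).1
    have h2 := mem_Tfin.mp (Finset.mem_filter.mp hP2).1
    obtain ⟨D1, hD1, haD1, hdD1, hmin1⟩ := (Finset.mem_filter.mp hP1).2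
    obtain ⟨D2, hD2, haD2, hdD2, hmin2⟩ := (Finset.mem_filter.mp hP2).2
    have hab1 : ablock a P1 = D1 := ablock_eq h1 hD1 haD1
    have hab2 : ablock a P2 = D2 := ablock_eq h2 hD2 haD2
    simp only [Prod.mk.injEq] at heq
    have hD12 : D1 = D2 := by
      have e1 : D1.erase a ∈ insert ((ablock a P1).erase a)
          (P1.filter (fun B => ∀ x ∈ B, d < x ∧ x < b)) := by
        rw [hab1]; exact Finset.mem_insert_self _ _
      rw [heq.2, hab2] at e1
      rcases Finset.mem_insert.mp e1 with hcon | hcon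
      · -- D1.erase a = D2.erase a
        have : insert a (D1.erase a) = insert a (D2.erase a) := by rw [hcon]
        rwa [Finset.insert_erase haD1, Finset.insert_erase haD2] at this
      · have := (Finset.mem_filter.mp hcon).2 d (Finset.mem_erase.mpr ⟨by omega, hdD1⟩)
        omega
    subst hD12
    have hdecomp : ∀ (P : Finset (Finset ℕ)), IsT s j a b P → D1 ∈ P →
        (∀ x ∈ D1, x ≠ a → d ≤ x) →
        P = insert D1 ((P.filter (fun B => ∀ x ∈ B, a < x ∧ x < d))
          ∪ (P.filter (fun B => ∀ x ∈ B, d < x ∧ x < b))) := by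
      intro P hIs hDP hminP
      ext B
      constructor
      · intro hB
        by_cases hBne : B = D1
        · simp [hBne]
        · rcases IsT_straddle hIs hDP haD1 hdD1 (by omega) hminP B hB hBne with hc | hc
          · exact Finset.mem_insert_of_mem (Finset.mem_union_left _
              (Finset.mem_filter.mpr ⟨hB, hc⟩))
          · exact Finset.mem_insert_of_mem (Finset.mem_union_right _
              (Finset.mem_filter.mpr ⟨hB, hc⟩))
      · intro hB
        rcases Finset.mem_insert.mp hB with rfl | hB'
        · exact hDP
        · rcases Finset.mem_union.mp hB' with hh | hh <;> exact Finset.mem_of_mem_filter _ hh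
    have hfil2 : P1.filter (fun B => ∀ x ∈ B, d < x ∧ x < b)
        = P2.filter (fun B => ∀ x ∈ B, d < x ∧ x < b) := by
      have e2 := heq.2
      rw [hab1, hab2] at e2
      have hne1 : D1.erase a ∉ P1.filter (fun B => ∀ x ∈ B, d < x ∧ x < b) := by
        intro hcon
        have := (Finset.mem_filter.mp hcon).2 d (Finset.mem_erase.mpr ⟨by omega, hdD1⟩)
        omega
      have hne2 : D1.erase a ∉ P2.filter (fun B => ∀ x ∈ B, d < x ∧ x < b) := by
        intro hcon
        have := (Finset.mem_filter.mp hcon).2 d (Finset.mem_erase.mpr ⟨by omega, hdD1⟩)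
        omega
      ext B
      constructor
      · intro hB
        have : B ∈ insert (D1.erase a) (P2.filter (fun B => ∀ x ∈ B, d < x ∧ x < b)) := by
          rw [← e2]; exact Finset.mem_insert_of_mem hB
        rcases Finset.mem_insert.mp this with rfl | hh
        · exact absurd hB hne1
        · exact hh
      · intro hB
        have : B ∈ insert (D1.erase a) (P1.filter (fun B => ∀ x ∈ B, d < x ∧ x < b)) := by
          rw [e2]; exact Finset.mem_insert_of_mem hB
        rcases Finset.mem_insert.mp this with rfl | hh
        · exact absurd hB hne2
        · exact hh
    rw [hdecomp P1 h1 hD1 hmin1, hdecomp P2 h2 hD2 hmin2, heq.1, hfil2]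
  · -- surjectivity
    intro Q hQ
    rw [Finset.mem_product] at hQ
    have hQ1 := mem_Tfin.mp hQ.1
    have hQ2 := mem_Tfin.mp hQ.2
    have hQ1e : ∀ B ∈ Q.1, ∀ x ∈ B, a + 1 ≤ x ∧ x < d := IsT_elem_mem hQ1
    have hQ2e : ∀ B ∈ Q.2, ∀ x ∈ B, d ≤ x ∧ x < b := IsT_elem_mem hQ2
    obtain ⟨D', hD', hdD'⟩ := (hQ2.1 d).mp (by simp [Finset.mem_Ico]; omega)
    have hD'card : D'.card = j - 1 := (hQ2.2.2.1 D' hD').1 hdD'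
    have haD' : a ∉ D' := fun hcon => by have := hQ2e D' hD' a hcon; omega
    set D := insert a D' with hDdef
    have haD : a ∈ D := Finset.mem_insert_self _ _
    have hdD : d ∈ D := Finset.mem_insert_of_mem hdD'
    have hDcard : D.card = j := by
      rw [hDdef, Finset.card_insert_of_notMem haD', hD'card]; omega
    have hDmin : ∀ x ∈ D, x ≠ a → d ≤ x := by
      intro x hx hxa
      rcases Finset.mem_insert.mp hx with rfl | hx'
      · omega
      · exact (hQ2e D' hD' x hx').1
    -- blocks of Q.2 other than D' avoid d
    have hQ2other : ∀ B ∈ Q.2, B ≠ D' → ∀ x ∈ B, d < x ∧ x < b := by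
      intro B hB hne x hx
      have h1 := hQ2e B hB x hx
      have hxd : x ≠ d := by
        intro hcon; subst hcon
        exact (Finset.disjoint_left.mp (hQ2.2.1 B hB D' hD' hne) hx) hdD'
      omega
    have hQ1block : ∀ B ∈ Q.1, ∀ x ∈ B, a < x ∧ x < d := by
      intro B hB x hx
      have := hQ1e B hB x hx; omega
    have hQ1nonempty : ∀ B ∈ Q.1, B.Nonempty := by
      intro B hB
      rw [← Finset.card_pos]
      rcases Classical.em ((a+1) ∈ B) with hm | hm
      · rw [(hQ1.2.2.1 B hB).1 hm]; omega
      · rw [(hQ1.2.2.1 B hB).2 hm]; omega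
    have hQ2nonempty : ∀ B ∈ Q.2, B.Nonempty := by
      intro B hB
      rw [← Finset.card_pos]
      rcases Classical.em (d ∈ B) with hm | hm
      · rw [(hQ2.2.2.1 B hB).1 hm]; omega
      · rw [(hQ2.2.2.1 B hB).2 hm]; omega
    have hDQ1 : D ∉ Q.1 := fun hcon => by have := hQ1e D hcon a haD; omega
    have hDQ2er : D ∉ Q.2.erase D' := by
      intro hcon
      have := hQ2e D (Finset.mem_of_mem_erase hcon) a haD; omega
    refine ⟨insert D (Q.1 ∪ Q.2.erase D'), ?_, ?_⟩
    · apply Finset.mem_filter.mpr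
      constructor
      · apply mem_Tfin.mpr
        refine ⟨fun x => ?_, ?_, ?_, ?_⟩
        · constructor
          · intro hx
            simp only [Finset.mem_Ico] at hx
            by_cases hxa : x = a
            · exact ⟨D, Finset.mem_insert_self _ _, hxa ▸ haD⟩
            by_cases hxlt : x < d
            · obtain ⟨B, hB, hxB⟩ := (hQ1.1 x).mp (by simp [Finset.mem_Ico]; omega)
              exact ⟨B, Finset.mem_insert_of_mem (Finset.mem_union_left _ hB), hxB⟩
            · obtain ⟨B, hB, hxB⟩ := (hQ2.1 x).mp (by simp [Finset.mem_Ico]; omega)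
              by_cases hBD : B = D'
              · subst hBD
                exact ⟨D, Finset.mem_insert_self _ _, Finset.mem_insert_of_mem hxB⟩
              · exact ⟨B, Finset.mem_insert_of_mem (Finset.mem_union_right _
                  (Finset.mem_erase.mpr ⟨hBD, hB⟩)), hxB⟩
          · rintro ⟨B, hB, hxB⟩
            simp only [Finset.mem_Ico]
            rcases Finset.mem_insert.mp hB with rfl | hB'
            · rcases Finset.mem_insert.mp hxB with rfl | hx'
              · omega
              · have := hQ2e D' hD' x hx'; omega
            · rcases Finset.mem_union.mp hB' with hh | hh
              · have := hQ1e B hh x hxB; omega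
              · have := hQ2e B (Finset.mem_of_mem_erase hh) x hxB; omega
        · intro B1 h1 B2 h2 hne
          have key : ∀ B1 ∈ Q.1 ∪ Q.2.erase D', Disjoint B1 D := by
            intro B hB
            rw [Finset.disjoint_right]
            intro x hxD hxB
            rcases Finset.mem_insert.mp hxD with rfl | hx'
            · rcases Finset.mem_union.mp hB with hh | hh
              · have := hQ1e B hh x hxB; omega
              · have := hQ2e B (Finset.mem_of_mem_erase hh) x hxB; omega
            · rcases Finset.mem_union.mp hB with hh | hh
              · have h1 := hQ1e B hh x hxB
                have h2 := hQ2e D' hD' x hx'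
                omega
              · exact (Finset.disjoint_left.mp
                  (hQ2.2.1 B (Finset.mem_of_mem_erase hh) D' hD' (Finset.ne_of_mem_erase hh))
                  hxB) hx'
          rcases Finset.mem_insert.mp h1 with rfl | h1' <;>
            rcases Finset.mem_insert.mp h2 with rfl | h2'
          · exact absurd rfl hne
          · exact (key B2 h2').symm
          · exact key B1 h1'
          · rcases Finset.mem_union.mp h1' with hh1 | hh1 <;>
              rcases Finset.mem_union.mp h2' with hh2 | hh2
            · exact hQ1.2.1 B1 hh1 B2 hh2 hne
            · rw [Finset.disjoint_left]
              intro x hx1 hx2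
              have := hQ1e B1 hh1 x hx1
              have := hQ2e B2 (Finset.mem_of_mem_erase hh2) x hx2
              omega
            · rw [Finset.disjoint_left]
              intro x hx1 hx2
              have := hQ2e B1 (Finset.mem_of_mem_erase hh1) x hx1
              have := hQ1e B2 hh2 x hx2
              omega
            · exact hQ2.2.1 B1 (Finset.mem_of_mem_erase hh1) B2 (Finset.mem_of_mem_erase hh2) hne
        · intro B hB
          rcases Finset.mem_insert.mp hB with rfl | hB'
          · exact ⟨fun _ => hDcard, fun hcon => absurd haD hcon⟩
          · rcases Finset.mem_union.mp hB' with hh | hh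
            · have hnota : a ∉ B := fun hcon => by have := hQ1e B hh a hcon; omega
              have hcard : B.card = s := by
                rcases Classical.em ((a+1) ∈ B) with hm | hm
                · exact (hQ1.2.2.1 B hh).1 hm
                · exact (hQ1.2.2.1 B hh).2 hm
              exact ⟨fun hcon => absurd hcon hnota, fun _ => hcard⟩
            · have hBQ2 := Finset.mem_of_mem_erase hh
              have hBne := Finset.ne_of_mem_erase hh
              have hnota : a ∉ B := fun hcon => by have := hQ2e B hBQ2 a hcon; omega
              have hnotd : d ∉ B := fun hcon => by
                have := hQ2other B hBQ2 hBne d hcon; omega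
              have hcard : B.card = s := (hQ2.2.2.1 B hBQ2).2 hnotd
              exact ⟨fun hcon => absurd hcon hnota, fun _ => hcard⟩
        · intro B1 h1 B2 h2 hne
          rintro ⟨p, hp, r, hr, q, hq, t, ht, o1, o2, o3⟩
          rcases Finset.mem_insert.mp h1 with rfl | h1' <;>
            rcases Finset.mem_insert.mp h2 with rfl | h2'
          · exact hne rfl
          · -- B1 = D; p, r ∈ D; q, t ∈ B2
            rcases Finset.mem_union.mp h2' with hh | hh
            · -- B2 ⊆ (a, d): so q, t < d; but r > q > a so r ∈ D', r ≥ d > t contradiction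
              have hq' := hQ1e B2 hh q hq
              have ht' := hQ1e B2 hh t ht
              have hrD : r ∈ D' := by
                rcases Finset.mem_insert.mp hr with rfl | hr'
                · omega
                · exact hr'
              have := hQ2e D' hD' r hrD
              omega
            · -- B2 ⊆ (d, b): reduce to crossing of D' and B2 in Q.2
              have hBQ2 := Finset.mem_of_mem_erase hh
              have hBne := Finset.ne_of_mem_erase hh
              have hq' := hQ2other B2 hBQ2 hBne q hq
              have ht' := hQ2other B2 hBQ2 hBne t ht
              have hrD : r ∈ D' := by
                rcases Finset.mem_insert.mp hr with rfl | hr'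
                · omega
                · exact hr'
              exact hQ2.2.2.2 D' hD' B2 hBQ2 (fun hcon => hBne hcon.symm)
                ⟨d, hdD', r, hrD, q, hq, t, ht, by omega, by omega, by omega⟩
          · -- B2 = D; p, r ∈ B1; q, t ∈ D
            rcases Finset.mem_union.mp h1' with hh | hh
            · -- B1 ⊆ (a, d): q with p < q < r < d: q ≠ a (q > p > a), q ∈ D' → q ≥ d
              have hp' := hQ1e B1 hh p hp
              have hr' := hQ1e B1 hh r hr
              have hqD : q ∈ D' := by
                rcases Finset.mem_insert.mp hq with rfl | hq'
                · omega
                · exact hq'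
              have := hQ2e D' hD' q hqD
              omega
            · -- B1 ⊆ (d, b): q, t ∈ D, q > p > d so q, t ∈ D'
              have hBQ2 := Finset.mem_of_mem_erase hh
              have hBne := Finset.ne_of_mem_erase hh
              have hp' := hQ2other B1 hBQ2 hBne p hp
              have hqD : q ∈ D' := by
                rcases Finset.mem_insert.mp hq with rfl | hq'
                · omega
                · exact hq'
              have htD : t ∈ D' := by
                rcases Finset.mem_insert.mp ht with rfl | ht'
                · omega
                · exact ht'
              exact hQ2.2.2.2 B1 hBQ2 D' hD' hBne
                ⟨p, hp, r, hr, q, hqD, t, htD, o1, o2, o3⟩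
          · rcases Finset.mem_union.mp h1' with hh1 | hh1 <;>
              rcases Finset.mem_union.mp h2' with hh2 | hh2
            · exact hQ1.2.2.2 B1 hh1 B2 hh2 hne ⟨p, hp, r, hr, q, hq, t, ht, o1, o2, o3⟩
            · have := hQ1e B1 hh1 r hr
              have := hQ2e B2 (Finset.mem_of_mem_erase hh2) q hq
              omega
            · have := hQ2e B1 (Finset.mem_of_mem_erase hh1) p hp
              have := hQ1e B2 hh2 t ht
              omega
            · exact hQ2.2.2.2 B1 (Finset.mem_of_mem_erase hh1) B2 (Finset.mem_of_mem_erase hh2)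
                hne ⟨p, hp, r, hr, q, hq, t, ht, o1, o2, o3⟩
      · exact ⟨D, Finset.mem_insert_self _ _, haD, hdD, hDmin⟩
    · -- map sends it back to Q
      have habl : ablock a (insert D (Q.1 ∪ Q.2.erase D')) = D := by
        ext x
        rw [ablock, Finset.mem_biUnion]
        constructor
        · rintro ⟨B, hB, hxB⟩
          by_cases haB : a ∈ B
          · rw [if_pos haB] at hxB
            rcases Finset.mem_insert.mp hB with rfl | hB'
            · exact hxB
            · exfalso
              rcases Finset.mem_union.mp hB' with hh | hh
              · have := hQ1e B hh a haB; omega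
              · have := hQ2e B (Finset.mem_of_mem_erase hh) a haB; omega
          · rw [if_neg haB] at hxB
            simp at hxB
        · intro hx
          exact ⟨D, Finset.mem_insert_self _ _, by rw [if_pos haD]; exact hx⟩
      have hcomp1 : (insert D (Q.1 ∪ Q.2.erase D')).filter (fun B => ∀ x ∈ B, a < x ∧ x < d)
          = Q.1 := by
        ext B
        rw [Finset.mem_filter]
        constructor
        · rintro ⟨hB, hcond⟩
          rcases Finset.mem_insert.mp hB with rfl | hB'
          · have := hcond a haD; omega
          · rcases Finset.mem_union.mp hB' with hh | hh
            · exact hh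
            · exfalso
              obtain ⟨x, hx⟩ := hQ2nonempty B (Finset.mem_of_mem_erase hh)
              have := hQ2e B (Finset.mem_of_mem_erase hh) x hx
              have := hcond x hx
              omega
        · intro hB
          exact ⟨Finset.mem_insert_of_mem (Finset.mem_union_left _ hB), hQ1block B hB⟩
      have hcomp2 : insert ((ablock a (insert D (Q.1 ∪ Q.2.erase D'))).erase a)
          ((insert D (Q.1 ∪ Q.2.erase D')).filter (fun B => ∀ x ∈ B, d < x ∧ x < b))
          = Q.2 := by
        rw [habl]
        have hDea : D.erase a = D' := by
          rw [hDdef, Finset.erase_insert haD']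
        have hfil : (insert D (Q.1 ∪ Q.2.erase D')).filter
            (fun B => ∀ x ∈ B, d < x ∧ x < b) = Q.2.erase D' := by
          ext B
          rw [Finset.mem_filter]
          constructor
          · rintro ⟨hB, hcond⟩
            rcases Finset.mem_insert.mp hB with rfl | hB'
            · have := hcond a haD; omega
            · rcases Finset.mem_union.mp hB' with hh | hh
              · exfalso
                obtain ⟨x, hx⟩ := hQ1nonempty B hh
                have := hQ1e B hh x hx
                have := hcond x hx
                omega
              · exact hh
          · intro hB
            exact ⟨Finset.mem_insert_of_mem (Finset.mem_union_right _ hB),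
              hQ2other B (Finset.mem_of_mem_erase hB) (Finset.ne_of_mem_erase hB)⟩
        rw [hDea, hfil, Finset.insert_erase hD']
      rw [hcomp1, hcomp2]

lemma pair_eq {x y a w : ℕ} (hxy : x < y) (haw : a < w) (h : ({x, y} : Finset ℕ) = {a, w}) :
    x = a ∧ y = w := by
  have hx : x ∈ ({a, w} : Finset ℕ) := by rw [← h]; simp
  have hy : y ∈ ({a, w} : Finset ℕ) := by rw [← h]; simp
  have ha : a ∈ ({x, y} : Finset ℕ) := by rw [h]; simp
  have hw : w ∈ ({x, y} : Finset ℕ) := by rw [h]; simp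
  simp at hx hy ha hw
  omega

lemma IsPr_elem_mem {κ a b : ℕ} {M : Finset (Finset ℕ)} (h : IsPr κ a b M) :
    ∀ e ∈ M, ∀ x ∈ e, a ≤ x ∧ x < b := by
  intro e he x hx
  have := (h.2.1 x).mpr ⟨e, he, hx⟩
  simpa [Finset.mem_Ico] using this

lemma IsPr_chord_of_min {κ a b : ℕ} {M : Finset (Finset ℕ)} (h : IsPr κ a b M) (hab : a < b) :
    ∃ w, a < w ∧ w < b ∧ (a + w + 1) % κ = 0 ∧ {a, w} ∈ M := by
  obtain ⟨e, he, hae⟩ := (h.2.1 a).mp (by simp [Finset.mem_Ico]; omega)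
  obtain ⟨x, hxe, y, hye, hxy, hres, hexy⟩ := h.1 e he
  have hxb := IsPr_elem_mem h e he x hxe
  have hyb := IsPr_elem_mem h e he y hye
  have hax : a = x := by
    rw [hexy] at hae; simp at hae
    rcases hae with rfl | rfl
    · rfl
    · omega
  subst hax
  exact ⟨y, hxy, hyb.2, hres, by rw [← hexy]; exact he⟩

lemma IsPr_straddle {κ a b w : ℕ} {M : Finset (Finset ℕ)} (h : IsPr κ a b M)
    (haw : a < w) (hchord : {a, w} ∈ M) :
    ∀ e ∈ M, e ≠ {a, w} → ((∀ x ∈ e, a < x ∧ x < w) ∨ (∀ x ∈ e, w < x ∧ x < b)) := by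
  intro e he hne
  obtain ⟨x, hxe, y, hye, hxy, hres, hexy⟩ := h.1 e he
  have hdisj := h.2.2.1 e he _ hchord hne
  have hxaw : x ≠ a ∧ x ≠ w := by
    constructor <;> intro hcon <;> subst hcon <;>
      exact (Finset.disjoint_left.mp hdisj hxe) (by simp)
  have hyaw : y ≠ a ∧ y ≠ w := by
    constructor <;> intro hcon <;> subst hcon <;>
      exact (Finset.disjoint_left.mp hdisj hye) (by simp)
  have hxb := IsPr_elem_mem h e he x hxe
  have hyb := IsPr_elem_mem h e he y hye
  have hnc := h.2.2.2 _ hchord e he (fun hcon => hne hcon.symm)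
  have hkey : ¬ (x < w ∧ w < y) := by
    rintro ⟨h1, h2⟩
    exact hnc ⟨a, by simp, w, by simp, x, hxe, y, hye, by omega, by omega, by omega⟩
  have hcases : (x < w ∧ y < w) ∨ (w < x ∧ w < y) := by omega
  rcases hcases with ⟨h1, h2⟩ | ⟨h1, h2⟩
  · left
    intro z hz
    rw [hexy] at hz; simp at hz
    rcases hz with rfl | rfl <;> omega
  · right
    intro z hz
    rw [hexy] at hz; simp at hz
    rcases hz with rfl | rfl <;> omega

lemma P_peel {κ a b : ℕ} (hab : a < b) :
    (Pfin κ a b).card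
      = ∑ w ∈ Finset.Ico (a + 1) b,
          if (a + w + 1) % κ = 0 then (Pfin κ (a + 1) w).card * (Pfin κ (w + 1) b).card
          else 0 := by
  classical
  have hsplit : Pfin κ a b
      = (Finset.Ico (a + 1) b).biUnion
          (fun w => (Pfin κ a b).filter (fun M => {a, w} ∈ M)) := by
    ext M
    rw [Finset.mem_biUnion]
    constructor
    · intro hM
      obtain ⟨w, h1, h2, _, h4⟩ := IsPr_chord_of_min (mem_Pfin.mp hM) hab
      exact ⟨w, by simp [Finset.mem_Ico]; omega, Finset.mem_filter.mpr ⟨hM, h4⟩⟩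
    · rintro ⟨w, _, hMf⟩
      exact (Finset.mem_filter.mp hMf).1
  have hdisj : ∀ w ∈ Finset.Ico (a + 1) b, ∀ w' ∈ Finset.Ico (a + 1) b, w ≠ w' →
      Disjoint ((Pfin κ a b).filter (fun M => {a, w} ∈ M))
        ((Pfin κ a b).filter (fun M => {a, w'} ∈ M)) := by
    intro w hw w' hw' hne
    simp only [Finset.mem_Ico] at hw hw'
    rw [Finset.disjoint_left]
    intro M hM1 hM2
    have h1 := (Finset.mem_filter.mp hM1).2
    have h2 := (Finset.mem_filter.mp hM2).2
    have h := mem_Pfin.mp (Finset.mem_filter.mp hM1).1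
    have hne2 : ({a, w} : Finset ℕ) ≠ {a, w'} := by
      intro hcon
      have : w ∈ ({a, w'} : Finset ℕ) := by rw [← hcon]; simp
      simp at this
      omega
    exact (Finset.disjoint_left.mp (h.2.2.1 _ h1 _ h2 hne2) (by simp : a ∈ ({a, w} : Finset ℕ)))
      (by simp)
  rw [hsplit, Finset.card_biUnion hdisj]
  refine Finset.sum_congr rfl (fun w hw => ?_)
  simp only [Finset.mem_Ico] at hw
  by_cases hres : (a + w + 1) % κ = 0
  · rw [if_pos hres, ← Finset.card_product]
    apply Finset.card_bij (fun M _ => (M.filter (fun e => ∀ x ∈ e, a < x ∧ x < w),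
      M.filter (fun e => ∀ x ∈ e, w < x ∧ x < b)))
    · -- maps into the product
      intro M hM
      have h := mem_Pfin.mp (Finset.mem_filter.mp hM).1
      have hchord := (Finset.mem_filter.mp hM).2
      rw [Finset.mem_product]
      constructor
      · apply mem_Pfin.mpr
        refine ⟨?_, fun x => ?_, ?_, ?_⟩
        · intro e he
          exact h.1 e (Finset.mem_of_mem_filter e he)
        · constructor
          · intro hx
            simp only [Finset.mem_Ico] at hx
            obtain ⟨e, he, hxe⟩ := (h.2.1 x).mp (by simp [Finset.mem_Ico]; omega)
            have hnechord : e ≠ {a, w} := by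
              intro hcon
              rw [hcon] at hxe; simp at hxe; omega
            rcases IsPr_straddle h (by omega) hchord e he hnechord with hc | hc
            · exact ⟨e, Finset.mem_filter.mpr ⟨he, hc⟩, hxe⟩
            · have := hc x hxe; omega
          · rintro ⟨e, he, hxe⟩
            have h1 := (Finset.mem_filter.mp he).2 x hxe
            simp [Finset.mem_Ico]; omega
        · intro e he e' he' hne
          exact h.2.2.1 e (Finset.mem_of_mem_filter e he) e' (Finset.mem_of_mem_filter e' he') hne
        · intro e he e' he' hne
          exact h.2.2.2 e (Finset.mem_of_mem_filter e he) e' (Finset.mem_of_mem_filter e' he') hne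
      · apply mem_Pfin.mpr
        refine ⟨?_, fun x => ?_, ?_, ?_⟩
        · intro e he
          exact h.1 e (Finset.mem_of_mem_filter e he)
        · constructor
          · intro hx
            simp only [Finset.mem_Ico] at hx
            obtain ⟨e, he, hxe⟩ := (h.2.1 x).mp (by simp [Finset.mem_Ico]; omega)
            have hnechord : e ≠ {a, w} := by
              intro hcon
              rw [hcon] at hxe; simp at hxe; omega
            rcases IsPr_straddle h (by omega) hchord e he hnechord with hc | hc
            · have := hc x hxe; omega
            · exact ⟨e, Finset.mem_filter.mpr ⟨he, hc⟩, hxe⟩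
          · rintro ⟨e, he, hxe⟩
            have h1 := (Finset.mem_filter.mp he).2 x hxe
            simp [Finset.mem_Ico]; omega
        · intro e he e' he' hne
          exact h.2.2.1 e (Finset.mem_of_mem_filter e he) e' (Finset.mem_of_mem_filter e' he') hne
        · intro e he e' he' hne
          exact h.2.2.2 e (Finset.mem_of_mem_filter e he) e' (Finset.mem_of_mem_filter e' he') hne
    · -- injectivity
      intro M1 hM1 M2 hM2 heq
      have h1 := mem_Pfin.mp (Finset.mem_filter.mp hM1).1
      have h2 := mem_Pfin.mp (Finset.mem_filter.mp hM2).1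
      have hc1 := (Finset.mem_filter.mp hM1).2
      have hc2 := (Finset.mem_filter.mp hM2).2
      simp only [Prod.mk.injEq] at heq
      have hdecomp : ∀ (M : Finset (Finset ℕ)), IsPr κ a b M → {a, w} ∈ M →
          M = insert {a, w} ((M.filter (fun e => ∀ x ∈ e, a < x ∧ x < w))
            ∪ (M.filter (fun e => ∀ x ∈ e, w < x ∧ x < b))) := by
        intro M hM hch
        ext e
        constructor
        · intro he
          by_cases hne : e = {a, w}
          · simp [hne]
          · rcases IsPr_straddle hM (by omega) hch e he hne with hc | hc
            · exact Finset.mem_insert_of_mem (Finset.mem_union_left _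
                (Finset.mem_filter.mpr ⟨he, hc⟩))
            · exact Finset.mem_insert_of_mem (Finset.mem_union_right _
                (Finset.mem_filter.mpr ⟨he, hc⟩))
        · intro he
          rcases Finset.mem_insert.mp he with rfl | he'
          · exact hch
          · rcases Finset.mem_union.mp he' with hh | hh <;>
              exact Finset.mem_of_mem_filter e hh
      rw [hdecomp M1 h1 hc1, hdecomp M2 h2 hc2, heq.1, heq.2]
    · -- surjectivity
      intro Q hQ
      rw [Finset.mem_product] at hQ
      have hQ1 := mem_Pfin.mp hQ.1
      have hQ2 := mem_Pfin.mp hQ.2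
      have hQ1e : ∀ e ∈ Q.1, ∀ x ∈ e, a + 1 ≤ x ∧ x < w := IsPr_elem_mem hQ1
      have hQ2e : ∀ e ∈ Q.2, ∀ x ∈ e, w + 1 ≤ x ∧ x < b := IsPr_elem_mem hQ2
      have hne1 : ({a, w} : Finset ℕ) ∉ Q.1 := by
        intro hcon
        have := hQ1e _ hcon a (by simp); omega
      have hne2 : ({a, w} : Finset ℕ) ∉ Q.2 := by
        intro hcon
        have := hQ2e _ hcon a (by simp); omega
      refine ⟨insert {a, w} (Q.1 ∪ Q.2), ?_, ?_⟩
      · apply Finset.mem_filter.mpr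
        refine ⟨mem_Pfin.mpr ⟨?_, fun x => ?_, ?_, ?_⟩, Finset.mem_insert_self _ _⟩
        · intro e he
          rcases Finset.mem_insert.mp he with rfl | he'
          · exact ⟨a, by simp, w, by simp, by omega, hres, rfl⟩
          · rcases Finset.mem_union.mp he' with hh | hh
            · exact hQ1.1 e hh
            · exact hQ2.1 e hh
        · constructor
          · intro hx
            simp only [Finset.mem_Ico] at hx
            by_cases hxa : x = a
            · exact ⟨{a, w}, Finset.mem_insert_self _ _, by simp [hxa]⟩
            by_cases hxw : x = w
            · exact ⟨{a, w}, Finset.mem_insert_self _ _, by simp [hxw]⟩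
            by_cases hxlt : x < w
            · obtain ⟨e, he, hxe⟩ := (hQ1.2.1 x).mp (by simp [Finset.mem_Ico]; omega)
              exact ⟨e, Finset.mem_insert_of_mem (Finset.mem_union_left _ he), hxe⟩
            · obtain ⟨e, he, hxe⟩ := (hQ2.2.1 x).mp (by simp [Finset.mem_Ico]; omega)
              exact ⟨e, Finset.mem_insert_of_mem (Finset.mem_union_right _ he), hxe⟩
          · rintro ⟨e, he, hxe⟩
            simp only [Finset.mem_Ico]
            rcases Finset.mem_insert.mp he with rfl | he'
            · simp at hxe
              rcases hxe with rfl | rfl <;> omega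
            · rcases Finset.mem_union.mp he' with hh | hh
              · have := hQ1e e hh x hxe; omega
              · have := hQ2e e hh x hxe; omega
        · intro e he e' he' hne
          rcases Finset.mem_insert.mp he with rfl | he2 <;>
            rcases Finset.mem_insert.mp he' with rfl | he2'
          · exact absurd rfl hne
          · rw [Finset.disjoint_right]
            intro x hx1 hx2
            simp at hx2
            rcases Finset.mem_union.mp he2' with hh | hh
            · have := hQ1e _ hh x hx1; omega
            · have := hQ2e _ hh x hx1; omega
          · rw [Finset.disjoint_left]
            intro x hx1 hx2
            simp at hx2
            rcases Finset.mem_union.mp he2 with hh | hh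
            · have := hQ1e _ hh x hx1; omega
            · have := hQ2e _ hh x hx1; omega
          · rcases Finset.mem_union.mp he2 with hh | hh <;>
              rcases Finset.mem_union.mp he2' with hh' | hh'
            · exact hQ1.2.2.1 e hh e' hh' hne
            · rw [Finset.disjoint_left]
              intro x hx1 hx2
              have := hQ1e _ hh x hx1
              have := hQ2e _ hh' x hx2
              omega
            · rw [Finset.disjoint_left]
              intro x hx1 hx2
              have := hQ2e _ hh x hx1
              have := hQ1e _ hh' x hx2
              omega
            · exact hQ2.2.2.1 e hh e' hh' hne
        · intro e he e' he' hne
          rintro ⟨p, hp, r, hr, q, hq, t, ht, o1, o2, o3⟩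
          rcases Finset.mem_insert.mp he with rfl | he2 <;>
            rcases Finset.mem_insert.mp he' with rfl | he2'
          · exact hne rfl
          · -- p, r ∈ {a, w}, q, t in another chord
            simp at hp hr
            rcases Finset.mem_union.mp he2' with hh | hh
            · have h1 := hQ1e _ hh q hq
              have h2 := hQ1e _ hh t ht
              omega
            · have h1 := hQ2e _ hh q hq
              have h2 := hQ2e _ hh t ht
              omega
          · simp at hq ht
            rcases Finset.mem_union.mp he2 with hh | hh
            · have h1 := hQ1e _ hh p hp
              have h2 := hQ1e _ hh r hr
              omega
            · have h1 := hQ2e _ hh p hp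
              have h2 := hQ2e _ hh r hr
              omega
          · rcases Finset.mem_union.mp he2 with hh | hh <;>
              rcases Finset.mem_union.mp he2' with hh' | hh'
            · exact hQ1.2.2.2 e hh e' hh' hne ⟨p, hp, r, hr, q, hq, t, ht, o1, o2, o3⟩
            · have h1 := hQ1e _ hh r hr
              have h2 := hQ2e _ hh' q hq
              omega
            · have h1 := hQ2e _ hh p hp
              have h2 := hQ1e _ hh' t ht
              omega
            · exact hQ2.2.2.2 e hh e' hh' hne ⟨p, hp, r, hr, q, hq, t, ht, o1, o2, o3⟩
      · -- the map sends it back to Q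
        have hfe1 : (insert {a, w} (Q.1 ∪ Q.2)).filter (fun e => ∀ x ∈ e, a < x ∧ x < w)
            = Q.1 := by
          ext e
          rw [Finset.mem_filter]
          constructor
          · rintro ⟨he, hcond⟩
            rcases Finset.mem_insert.mp he with rfl | he'
            · have := hcond w (by simp); omega
            · rcases Finset.mem_union.mp he' with hh | hh
              · exact hh
              · obtain ⟨x, hxe, _, _, _, _, _⟩ := hQ2.1 e hh
                have := hQ2e e hh x hxe
                have := hcond x hxe
                omega
          · intro he
            exact ⟨Finset.mem_insert_of_mem (Finset.mem_union_left _ he),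
              fun x hx => by have := hQ1e e he x hx; omega⟩
        have hfe2 : (insert {a, w} (Q.1 ∪ Q.2)).filter (fun e => ∀ x ∈ e, w < x ∧ x < b)
            = Q.2 := by
          ext e
          rw [Finset.mem_filter]
          constructor
          · rintro ⟨he, hcond⟩
            rcases Finset.mem_insert.mp he with rfl | he'
            · have := hcond a (by simp); omega
            · rcases Finset.mem_union.mp he' with hh | hh
              · obtain ⟨x, hxe, _, _, _, _, _⟩ := hQ1.1 e hh
                have := hQ1e e hh x hxe
                have := hcond x hxe
                omega
              · exact hh
          · intro he
            exact ⟨Finset.mem_insert_of_mem (Finset.mem_union_right _ he),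
              fun x hx => by have := hQ2e e he x hx; omega⟩
        rw [hfe1, hfe2]
  · rw [if_neg hres]
    rw [Finset.card_eq_zero, Finset.eq_empty_iff_forall_notMem]
    intro M hM
    have h := mem_Pfin.mp (Finset.mem_filter.mp hM).1
    have hchord := (Finset.mem_filter.mp hM).2
    obtain ⟨x, hxe, y, hye, hxy, hres2, hexy⟩ := h.1 _ hchord
    obtain ⟨hxa, hyw⟩ := pair_eq hxy (by omega : a < w) hexy.symm
    subst hxa; subst hyw
    exact hres hres2

/-! #### Arithmetic consequences: the Fuss–Catalan convolution system -/

lemma vcount_one {s : ℕ} (hs : 2 ≤ s) (t : ℕ) : vcount s 1 t = gcount s t := by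
  rw [vcount, gcount, T1_peel hs (by omega)]
  have h1 : (0 : ℕ) + 1 = 1 := rfl
  have h2 : s * t + 1 = 1 + s * t := by ring
  rw [← h1, ← h2]
  exact Tfin_card_shift s s 0 (s * t) 1

lemma gcount_succ {s : ℕ} (t : ℕ) : gcount s (t + 1) = vcount s s t := by
  have : s * (t + 1) = s + s * t := by ring
  rw [gcount, vcount, this]

lemma sum_sparse_reindex {c L M T : ℕ} (f : ℕ → ℕ) (hM : 0 < M)
    (hzero : ∀ w ∈ Finset.Ico c (c + L), (¬ ∃ i, i < T ∧ w = c + M * i) → f w = 0)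
    (hin : ∀ i, i < T → c + M * i < c + L) :
    ∑ w ∈ Finset.Ico c (c + L), f w = ∑ i ∈ Finset.range T, f (c + M * i) := by
  have hinj : ∀ x ∈ Finset.range T, ∀ y ∈ Finset.range T,
      c + M * x = c + M * y → x = y := by
    intro x _ y _ h
    have : M * x = M * y := by omega
    exact Nat.eq_of_mul_eq_mul_left hM this
  have himage : ∑ w ∈ (Finset.range T).image (fun i => c + M * i), f w
      = ∑ i ∈ Finset.range T, f (c + M * i) := Finset.sum_image hinj
  rw [← himage]
  apply (Finset.sum_subset ?_ ?_).symm
  · intro w hw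
    obtain ⟨i, hi, rfl⟩ := Finset.mem_image.mp hw
    simp only [Finset.mem_range] at hi
    simp only [Finset.mem_Ico]
    exact ⟨by omega, hin i hi⟩
  · intro w hw hnot
    apply hzero w hw
    rintro ⟨i, hi, rfl⟩
    exact hnot (Finset.mem_image.mpr ⟨i, Finset.mem_range.mpr hi, rfl⟩)

lemma sum_sparse_reindex' {c L M ρ T : ℕ} (f : ℕ → ℕ) (hM : 0 < M)
    (hzero : ∀ w ∈ Finset.Ico c (c + L), (¬ ∃ i, i < T ∧ w = c + ρ + M * i) → f w = 0)
    (hin : ∀ i, i < T → ρ + M * i < L) :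
    ∑ w ∈ Finset.Ico c (c + L), f w = ∑ i ∈ Finset.range T, f (c + ρ + M * i) := by
  have hinj : ∀ x ∈ Finset.range T, ∀ y ∈ Finset.range T,
      c + ρ + M * x = c + ρ + M * y → x = y := by
    intro x _ y _ h
    have : M * x = M * y := by omega
    exact Nat.eq_of_mul_eq_mul_left hM this
  have himage : ∑ w ∈ (Finset.range T).image (fun i => c + ρ + M * i), f w
      = ∑ i ∈ Finset.range T, f (c + ρ + M * i) := Finset.sum_image hinj
  rw [← himage]
  apply (Finset.sum_subset ?_ ?_).symm
  · intro w hw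
    obtain ⟨i, hi, rfl⟩ := Finset.mem_image.mp hw
    simp only [Finset.mem_range] at hi
    simp only [Finset.mem_Ico]
    have := hin i hi
    omega
  · intro w hw hnot
    apply hzero w hw
    rintro ⟨i, hi, rfl⟩
    exact hnot (Finset.mem_image.mpr ⟨i, Finset.mem_range.mpr hi, rfl⟩)

lemma vcount_succ {s j : ℕ} (hs : 2 ≤ s) (hj : 1 ≤ j) (t : ℕ) :
    vcount s (j + 1) t = ∑ i ∈ Finset.range (t + 1), gcount s i * vcount s j (t - i) := by
  have hb : 0 < (j + 1) + s * t := by omega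
  rw [vcount, T_peel hs (by omega) hb]
  have hIco : Finset.Ico (0 + 1) ((j + 1) + s * t) = Finset.Ico 1 (1 + (j + s * t)) := by
    congr 1
    omega
  rw [hIco]
  rw [sum_sparse_reindex
    (f := fun d => (Tfin s s (0 + 1) d).card * (Tfin s (j + 1 - 1) d ((j+1) + s*t)).card)
    (M := s) (T := t + 1) (by omega) ?_ ?_]
  · refine Finset.sum_congr rfl (fun i hi => ?_)
    simp only [Finset.mem_range] at hi
    have hfst : (Tfin s s (0 + 1) (1 + s * i)).card = gcount s i := by
      have h0 := Tfin_card_shift s s 0 (s * i) 1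
      have hidx : (1 : ℕ) + s * i = s * i + 1 := by omega
      rw [gcount, hidx]
      exact h0
    have hsnd : (Tfin s (j + 1 - 1) (1 + s * i) ((j + 1) + s * t)).card = vcount s j (t - i) := by
      have h0 := Tfin_card_shift s j 0 (j + s * (t - i)) (1 + s * i)
      rw [Nat.zero_add] at h0
      have harith : (j + 1) + s * t = j + s * (t - i) + (1 + s * i) := by
        have h2 : s * (t - i) + s * i = s * t := by
          rw [← Nat.mul_add]
          congr 1
          omega
        omega
      rw [vcount, harith]
      exact h0
    rw [hfst, hsnd]
  · -- zero off the progression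
    intro w hw hnot
    simp only [Finset.mem_Ico] at hw
    rcases Classical.em (∃ i, w = 1 + s * i) with ⟨i, rfl⟩ | hno
    · have hit : t < i := by
        by_contra hcon
        exact hnot ⟨i, by omega, rfl⟩
      -- second factor is zero
      have hzz : (Tfin s (j + 1 - 1) (1 + s * i) ((j + 1) + s * t)).card = 0 := by
        apply Tfin_card_of_no_length (by omega) (by omega)
        rintro ⟨t', ht'⟩
        have h1 : s * (t + 1) ≤ s * i := Nat.mul_le_mul_left s (by omega)
        have h2 : s * (t + 1) = s * t + s := by ring
        omega
      show (Tfin s s (0 + 1) (1 + s * i)).card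
          * (Tfin s (j + 1 - 1) (1 + s * i) ((j + 1) + s * t)).card = 0
      rw [hzz, Nat.mul_zero]
    · -- first factor is zero
      have hw1 : 1 < w := by
        rcases Nat.lt_or_ge 1 w with h | h
        · exact h
        · exfalso
          have : w = 1 := by omega
          exact hno ⟨0, by omega⟩
      have hzz : (Tfin s s (0 + 1) w).card = 0 := by
        apply Tfin_card_of_no_length (by omega) (by omega)
        rintro ⟨t', ht'⟩
        exact hno ⟨t' + 1, by rw [Nat.mul_add]; omega⟩
      show (Tfin s s (0 + 1) w).card * (Tfin s (j + 1 - 1) w ((j + 1) + s * t)).card = 0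
      rw [hzz, Nat.zero_mul]
  · intro i hi
    have h1 : s * i + s ≤ s * t + s := by
      have : s * i ≤ s * t := Nat.mul_le_mul_left s (by omega)
      omega
    omega

lemma sum_triangle (f g h : ℕ → ℕ) (t : ℕ) :
    ∑ a ∈ Finset.range (t + 1), f a * (∑ b ∈ Finset.range (t - a + 1), g b * h (t - a - b))
      = ∑ i ∈ Finset.range (t + 1),
          (∑ a ∈ Finset.range (i + 1), f a * g (i - a)) * h (t - i) := by
  have lhs_eq : ∑ a ∈ Finset.range (t + 1),
      f a * (∑ b ∈ Finset.range (t - a + 1), g b * h (t - a - b))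
      = ∑ x ∈ (Finset.range (t + 1)).sigma (fun a => Finset.range (t - a + 1)),
          f x.1 * g x.2 * h (t - x.1 - x.2) := by
    rw [Finset.sum_sigma]
    refine Finset.sum_congr rfl (fun a _ => ?_)
    rw [Finset.mul_sum]
    refine Finset.sum_congr rfl (fun b _ => ?_)
    ring
  have rhs_eq : ∑ i ∈ Finset.range (t + 1),
      (∑ a ∈ Finset.range (i + 1), f a * g (i - a)) * h (t - i)
      = ∑ x ∈ (Finset.range (t + 1)).sigma (fun i => Finset.range (i + 1)),
          f x.2 * g (x.1 - x.2) * h (t - x.1) := by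
    rw [Finset.sum_sigma]
    refine Finset.sum_congr rfl (fun i _ => ?_)
    rw [Finset.sum_mul]
  rw [lhs_eq, rhs_eq]
  apply Finset.sum_nbij' (fun x => ⟨x.1 + x.2, x.1⟩) (fun x => ⟨x.2, x.1 - x.2⟩)
  · intro x hx
    simp only [Finset.mem_sigma, Finset.mem_range] at hx ⊢
    omega
  · intro x hx
    simp only [Finset.mem_sigma, Finset.mem_range] at hx ⊢
    omega
  · intro x hx
    obtain ⟨x1, x2⟩ := x
    simp only [Finset.mem_sigma, Finset.mem_range] at hx
    have h : x1 + x2 - x1 = x2 := by omega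
    simp [h]
  · intro x hx
    obtain ⟨x1, x2⟩ := x
    simp only [Finset.mem_sigma, Finset.mem_range] at hx
    have h : x2 + (x1 - x2) = x1 := by omega
    simp [h]
  · intro x hx
    simp only [Finset.mem_sigma, Finset.mem_range] at hx
    have h1 : x.1 + x.2 - x.1 = x.2 := by omega
    have h2 : t - x.1 - x.2 = t - (x.1 + x.2) := by omega
    rw [h1, h2]

lemma vconv {s q : ℕ} (hs : 2 ≤ s) (hq : 1 ≤ q) :
    ∀ p, 1 ≤ p → ∀ t,
      vcount s (p + q) t = ∑ i ∈ Finset.range (t + 1), vcount s p i * vcount s q (t - i) := by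
  intro p
  induction p with
  | zero => intro h; omega
  | succ p ih =>
    intro hp t
    rcases Nat.eq_or_lt_of_le hp with h1 | h1
    · -- p + 1 = 1, i.e. p = 0
      have hp0 : p = 0 := by omega
      subst hp0
      have e1 : 0 + 1 + q = q + 1 := by omega
      rw [e1, vcount_succ hs hq t]
      refine Finset.sum_congr rfl (fun i hi => ?_)
      rw [vcount_one hs]
    · have hp' : 1 ≤ p := by omega
      have e1 : p + 1 + q = (p + q) + 1 := by omega
      rw [e1, vcount_succ hs (by omega) t]
      have e2 : ∀ a ∈ Finset.range (t + 1), gcount s a * vcount s (p + q) (t - a)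
          = gcount s a * (∑ b ∈ Finset.range (t - a + 1), vcount s p b * vcount s q (t - a - b)) := by
        intro a _
        rw [ih hp' (t - a)]
      rw [Finset.sum_congr rfl e2, sum_triangle (gcount s) (vcount s p) (vcount s q) t]
      refine Finset.sum_congr rfl (fun i hi => ?_)
      congr 1
      exact (vcount_succ hs hp' i).symm

/-! #### The master computation for pairing counts -/

noncomputable def NF (s k a L : ℕ) : ℕ :=
  if L % (2 * k) = 0 then gcount s (L / (2 * k))
  else if (L + 2 * a) % (2 * k) = 0 then vcount s (s - a % k) (L / (2 * k)) else 0

lemma mod_decomp {k u q r : ℕ} (hr : r < k) (h : u = k * q + r) : u % k = r ∧ u / k = q := by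
  subst h
  constructor
  · rw [Nat.add_comm, Nat.mul_comm, Nat.add_mul_mod_self_right]
    exact Nat.mod_eq_of_lt hr
  · rw [Nat.add_comm, Nat.mul_comm, Nat.add_mul_div_right _ _ (by omega : 0 < k),
      Nat.div_eq_of_lt hr]
    omega

lemma NF_full {s k : ℕ} (hk : 1 ≤ k) (a T : ℕ) : NF s k a (2 * k * T) = gcount s T := by
  rw [NF, if_pos (Nat.mul_mod_right _ _), Nat.mul_div_cancel_left _ (by omega : 0 < 2 * k)]

lemma NF_def {s k u T r : ℕ} (hk : 1 ≤ k) (hr : u % k = r) (hr0 : r ≠ 0) :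
    NF s k u (2 * k * T + (2 * k - 2 * r)) = vcount s (s - r) T := by
  have hrk : r < k := hr ▸ Nat.mod_lt _ (by omega)
  have h1 : (2 * k * T + (2 * k - 2 * r)) % (2 * k) = 2 * k - 2 * r := by
    rw [Nat.add_comm, Nat.add_mul_mod_self_left]
    exact Nat.mod_eq_of_lt (by omega)
  have h2 : (2 * k * T + (2 * k - 2 * r)) % (2 * k) ≠ 0 := by rw [h1]; omega
  have hdvd : ((2 * k * T + (2 * k - 2 * r)) + 2 * u) % (2 * k) = 0 := by
    have hu := Nat.div_add_mod u k
    have e2 : 2 * k * (T + 1 + u / k) = 2 * k * T + 2 * k + 2 * (k * (u / k)) := by ring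
    have e : (2 * k * T + (2 * k - 2 * r)) + 2 * u = 2 * k * (T + 1 + u / k) := by omega
    rw [e]
    exact Nat.mul_mod_right _ _
  have hdiv : (2 * k * T + (2 * k - 2 * r)) / (2 * k) = T := by
    rw [Nat.add_comm, Nat.add_mul_div_left _ _ (by omega : 0 < 2 * k),
      Nat.div_eq_of_lt (by omega)]
    omega
  rw [NF, if_neg h2, if_pos hdvd, hdiv, hr]

lemma NF_inside {s k a i : ℕ} (hs : 2 ≤ s) (hk : k + 1 = s) :
    NF s k (a + 1) (2 * (k - 1 - a % k) + 2 * k * i) = vcount s (k - a % k) i := by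
  have hk1 : 1 ≤ k := by omega
  set r := a % k with hr
  have hrk : r < k := Nat.mod_lt _ (by omega)
  by_cases hre : r = k - 1
  · have h0 : 2 * (k - 1 - r) = 0 := by omega
    rw [h0, Nat.zero_add, NF_full hk1]
    have h1 : k - r = 1 := by omega
    rw [h1, vcount_one hs]
  · have hr1 : r + 1 < k := by omega
    have hadm := Nat.div_add_mod a k
    have hmod : (a + 1) % k = r + 1 :=
      (mod_decomp hr1 (by omega : a + 1 = k * (a / k) + (r + 1))).1
    have e : 2 * (k - 1 - r) + 2 * k * i = 2 * k * i + (2 * k - 2 * (r + 1)) := by omega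
    rw [e, NF_def hk1 hmod (by omega)]
    have e2 : s - (r + 1) = k - r := by omega
    rw [e2]

lemma NF_outside_full {s k a i u T0 : ℕ} (hs : 2 ≤ s) (hk : k + 1 = s)
    (hu : u = a + 2 + 2 * (k - 1 - a % k) + 2 * k * i)
    (hlen : ∃ LL, LL = 2 * k * (T0 - 1 - i) + 2 * (a % k)) : True := trivial

theorem master {s k : ℕ} (hs : 2 ≤ s) (hk : k + 1 = s) :
    ∀ L a, (Pfin (2 * k) a (a + L)).card = NF s k a L := by
  have hk1 : 1 ≤ k := by omega
  intro L
  induction L using Nat.strong_induction_on with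
  | _ L IH =>
    intro a
    rcases Nat.eq_zero_or_pos L with rfl | hL
    · rw [Nat.add_zero, Pfin_nil, Finset.card_singleton]
      rw [NF, if_pos (by simp), Nat.zero_div, gcount_zero (by omega)]
    · have hab : a < a + L := by omega
      rw [P_peel hab]
      set r := a % k with hr
      have hrk : r < k := Nat.mod_lt _ (by omega)
      set ρ := 2 * (k - 1 - r) with hρ
      have hρk : ρ + 2 * r + 2 = 2 * k := by omega
      have hadm := Nat.div_add_mod a k
      have hbase : 2 * a + 2 + ρ = 2 * k * (a / k + 1) := by
        have e : 2 * k * (a / k + 1) = 2 * (k * (a / k)) + 2 * k := by ring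
        omega
      -- every residue-valid w in range is on the progression
      have hform : ∀ w, a + 1 ≤ w → (a + w + 1) % (2 * k) = 0 →
          ∃ i, w = a + 1 + ρ + 2 * k * i := by
        intro w hw hres
        obtain ⟨m, hm⟩ : ∃ m, a + w + 1 = 2 * k * m :=
          ⟨(a + w + 1) / (2 * k), by
            have := Nat.div_add_mod (a + w + 1) (2 * k)
            omega⟩
        have hmge : a / k + 1 ≤ m := by
          by_contra hcon
          have : m ≤ a / k := by omega
          have h2 : 2 * k * m ≤ 2 * k * (a / k) := Nat.mul_le_mul_left _ this
          have e : 2 * k * (a / k + 1) = 2 * k * (a / k) + 2 * k := by ring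
          omega
        refine ⟨m - (a / k + 1), ?_⟩
        have e : 2 * k * m = 2 * k * (a / k + 1) + 2 * k * (m - (a / k + 1)) := by
          rw [← Nat.mul_add]
          congr 1
          omega
        omega
      -- residue validity of progression points
      have hresOK : ∀ i, (a + (a + 1 + ρ + 2 * k * i) + 1) % (2 * k) = 0 := by
        intro i
        have e : a + (a + 1 + ρ + 2 * k * i) + 1 = 2 * k * (a / k + 1 + i) := by
          have e2 : 2 * k * (a / k + 1 + i) = 2 * k * (a / k + 1) + 2 * k * i := by ring
          omega
        rw [e]
        exact Nat.mul_mod_right _ _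
      by_cases hA : L % (2 * k) = 0
      · -- full case : L = 2k T0 with T0 ≥ 1
        obtain ⟨T0, hT0⟩ : ∃ T0, L = 2 * k * T0 :=
          ⟨L / (2 * k), by have := Nat.div_add_mod L (2 * k); omega⟩
        have hT01 : 1 ≤ T0 := by
          rcases Nat.eq_zero_or_pos T0 with rfl | h
          · simp at hT0; omega
          · exact h
        have hIco : Finset.Ico (a + 1) (a + L) = Finset.Ico (a + 1) ((a + 1) + (L - 1)) := by
          congr 1; omega
        rw [hIco]
        rw [sum_sparse_reindex' (c := a + 1) (M := 2 * k) (ρ := ρ) (T := T0)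
          (f := fun w => if (a + w + 1) % (2 * k) = 0
            then (Pfin (2 * k) (a + 1) w).card * (Pfin (2 * k) (w + 1) (a + L)).card else 0)
          (by omega) ?_ ?_]
        · -- per-term computation and convolution
          have hterm : ∀ i ∈ Finset.range T0,
              (if (a + (a + 1 + ρ + 2 * k * i) + 1) % (2 * k) = 0
                then (Pfin (2 * k) (a + 1) (a + 1 + ρ + 2 * k * i)).card
                  * (Pfin (2 * k) (a + 1 + ρ + 2 * k * i + 1) (a + L)).card else 0)
              = vcount s (k - r) i * vcount s (r + 1) (T0 - 1 - i) := by
            intro i hi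
            simp only [Finset.mem_range] at hi
            rw [if_pos (hresOK i)]
            have hilt : 2 * k * i + 2 * k ≤ 2 * k * T0 := by
              have : 2 * k * (i + 1) ≤ 2 * k * T0 := Nat.mul_le_mul_left _ (by omega)
              have e : 2 * k * (i + 1) = 2 * k * i + 2 * k := by ring
              omega
            have hin : (Pfin (2 * k) (a + 1) (a + 1 + ρ + 2 * k * i)).card
                = vcount s (k - r) i := by
              have e : a + 1 + ρ + 2 * k * i = (a + 1) + (ρ + 2 * k * i) := by omega
              rw [e, IH (ρ + 2 * k * i) (by omega) (a + 1)]
              have hNFi := NF_inside (a := a) (i := i) hs hk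
              rw [← hr, ← hρ] at hNFi
              exact hNFi
            have hout : (Pfin (2 * k) (a + 1 + ρ + 2 * k * i + 1) (a + L)).card
                = vcount s (r + 1) (T0 - 1 - i) := by
              set w := a + 1 + ρ + 2 * k * i with hw
              have hLL : a + L = (w + 1) + (2 * k * (T0 - 1 - i) + 2 * r) := by
                have e3 : 2 * k * T0 = 2 * k * ((T0 - 1 - i) + i + 1) := by
                  congr 1
                  omega
                have e4 : 2 * k * ((T0 - 1 - i) + i + 1)
                    = 2 * k * (T0 - 1 - i) + 2 * k * i + 2 * k := by ring
                omega
              rw [hLL, IH _ (by omega) (w + 1)]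
              -- (w+1) % k = (k - r) % k
              have hwmod : (w + 1) % k = if r = 0 then 0 else k - r := by
                by_cases hr0 : r = 0
                · rw [if_pos hr0]
                  have e4 : w + 1 = k * (a / k + 2 * i + 2) + 0 := by
                    have e5 : k * (a / k + 2 * i + 2)
                        = k * (a / k) + 2 * k * i + 2 * k := by ring
                    omega
                  exact (mod_decomp (by omega) e4).1
                · rw [if_neg hr0]
                  have e4 : w + 1 = k * (a / k + 2 * i + 1) + (k - r) := by
                    have e5 : k * (a / k + 2 * i + 1)
                        = k * (a / k) + 2 * k * i + k := by ring
                    omega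
                  exact (mod_decomp (by omega) e4).1
              by_cases hr0 : r = 0
              · rw [if_pos hr0] at hwmod
                have e6 : 2 * k * (T0 - 1 - i) + 2 * r = 2 * k * (T0 - 1 - i) := by
                  rw [hr0]; omega
                rw [e6, NF_full hk1, hr0]
                rw [vcount_one hs]
              · rw [if_neg hr0] at hwmod
                have e7 : 2 * r = 2 * k - 2 * (k - r) := by omega
                rw [e7, NF_def hk1 hwmod (by omega)]
                have e8 : s - (k - r) = r + 1 := by omega
                rw [e8]
            rw [hin, hout]
          rw [Finset.sum_congr rfl hterm]
          -- now the convolution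
          have hconv := vconv hs (by omega : 1 ≤ r + 1) (k - r) (by omega) (T0 - 1)
          have e9 : k - r + (r + 1) = s := by omega
          rw [e9] at hconv
          have e10 : Finset.range T0 = Finset.range ((T0 - 1) + 1) := by congr 1; omega
          have e11 : ∀ i ∈ Finset.range T0,
              vcount s (k - r) i * vcount s (r + 1) (T0 - 1 - i)
              = vcount s (k - r) i * vcount s (r + 1) ((T0 - 1) - i) := by
            intro i _; rfl
          rw [Finset.sum_congr e10 (fun i hi => rfl), ← hconv]
          have e12 : vcount s s (T0 - 1) = gcount s T0 := by
            rw [← gcount_succ]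
            congr 1
            omega
          rw [e12, hT0, NF_full hk1]
        · -- vanishing off the progression
          intro w hw hnot
          simp only [Finset.mem_Ico] at hw
          have hnores : ¬ (a + w + 1) % (2 * k) = 0 := by
            intro hres
            obtain ⟨i, hi⟩ := hform w (by omega) hres
            apply hnot
            refine ⟨i, ?_, hi⟩
            by_contra hcon
            have : 2 * k * T0 ≤ 2 * k * i := Nat.mul_le_mul_left _ (by omega)
            omega
          exact if_neg hnores
        · intro i hi
          have : 2 * k * (i + 1) ≤ 2 * k * T0 := Nat.mul_le_mul_left _ (by omega)
          have e : 2 * k * (i + 1) = 2 * k * i + 2 * k := by ring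
          omega
      · by_cases hB : (L + 2 * a) % (2 * k) = 0
        · -- deficient case
          -- derive r ≠ 0 and L = 2k T0 + (2k - 2r)
          have hc := Nat.div_add_mod L (2 * k)
          set c := L % (2 * k) with hcdef
          have hcm : (c + 2 * r) % (2 * k) = 0 := by
            have e : L + 2 * a = c + 2 * r + 2 * k * (L / (2 * k) + a / k) := by
              have e2 : 2 * k * (L / (2 * k) + a / k)
                  = 2 * k * (L / (2 * k)) + 2 * (k * (a / k)) := by ring
              omega
            rw [e, Nat.add_mul_mod_self_left] at hB
            exact hB
          have hclt : c < 2 * k := Nat.mod_lt _ (by omega)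
          have hr0 : r ≠ 0 := by
            intro hcon
            rw [hcon] at hcm
            simp at hcm
            have : c % (2 * k) = c := Nat.mod_eq_of_lt hclt
            omega
          have hceq : c = 2 * k - 2 * r := by
            obtain ⟨d, hd⟩ : ∃ d, c + 2 * r = 2 * k * d :=
              ⟨(c + 2 * r) / (2 * k), by have := Nat.div_add_mod (c + 2 * r) (2 * k); omega⟩
            have hd2 : d < 2 := by
              by_contra hcon
              have : 2 * k * 2 ≤ 2 * k * d := Nat.mul_le_mul_left _ (by omega)
              omega
            interval_cases d <;> omega
          set T0 := L / (2 * k) with hT0def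
          have hT0 : L = 2 * k * T0 + (2 * k - 2 * r) := by omega
          have hIco : Finset.Ico (a + 1) (a + L) = Finset.Ico (a + 1) ((a + 1) + (L - 1)) := by
            congr 1; omega
          rw [hIco]
          rw [sum_sparse_reindex' (c := a + 1) (M := 2 * k) (ρ := ρ) (T := T0 + 1)
            (f := fun w => if (a + w + 1) % (2 * k) = 0
              then (Pfin (2 * k) (a + 1) w).card * (Pfin (2 * k) (w + 1) (a + L)).card else 0)
            (by omega) ?_ ?_]
          · have hterm : ∀ i ∈ Finset.range (T0 + 1),
                (if (a + (a + 1 + ρ + 2 * k * i) + 1) % (2 * k) = 0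
                  then (Pfin (2 * k) (a + 1) (a + 1 + ρ + 2 * k * i)).card
                    * (Pfin (2 * k) (a + 1 + ρ + 2 * k * i + 1) (a + L)).card else 0)
                = vcount s (k - r) i * vcount s 1 (T0 - i) := by
              intro i hi
              simp only [Finset.mem_range] at hi
              rw [if_pos (hresOK i)]
              have hile : 2 * k * i ≤ 2 * k * T0 := Nat.mul_le_mul_left _ (by omega)
              have hin : (Pfin (2 * k) (a + 1) (a + 1 + ρ + 2 * k * i)).card
                  = vcount s (k - r) i := by
                have e : a + 1 + ρ + 2 * k * i = (a + 1) + (ρ + 2 * k * i) := by omega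
                rw [e, IH (ρ + 2 * k * i) (by omega) (a + 1)]
                have hNFi := NF_inside (a := a) (i := i) hs hk
                rw [← hr, ← hρ] at hNFi
                exact hNFi
              have hout : (Pfin (2 * k) (a + 1 + ρ + 2 * k * i + 1) (a + L)).card
                  = vcount s 1 (T0 - i) := by
                set w := a + 1 + ρ + 2 * k * i with hw
                have hLL : a + L = (w + 1) + (2 * k * (T0 - i)) := by
                  have e3 : 2 * k * T0 = 2 * k * (T0 - i) + 2 * k * i := by
                    rw [← Nat.mul_add]
                    congr 1
                    omega
                  omega
                rw [hLL, IH _ (by omega) (w + 1), NF_full hk1, ← vcount_one hs]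
              rw [hin, hout]
            rw [Finset.sum_congr rfl hterm]
            have hconv := vconv hs (by omega : 1 ≤ 1) (k - r) (by omega) T0
            have e9 : k - r + 1 = s - r := by omega
            rw [e9] at hconv
            rw [← hconv, hT0, NF_def hk1 hr.symm hr0]
          · intro w hw hnot
            simp only [Finset.mem_Ico] at hw
            have hnores : ¬ (a + w + 1) % (2 * k) = 0 := by
              intro hres
              obtain ⟨i, hi⟩ := hform w (by omega) hres
              apply hnot
              refine ⟨i, ?_, hi⟩
              by_contra hcon
              have : 2 * k * (T0 + 1) ≤ 2 * k * i := Nat.mul_le_mul_left _ (by omega)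
              have e : 2 * k * (T0 + 1) = 2 * k * T0 + 2 * k := by ring
              omega
            exact if_neg hnores
          · intro i hi
            have : 2 * k * i ≤ 2 * k * T0 := Nat.mul_le_mul_left _ (by omega)
            omega
        · -- zero case
          rw [NF, if_neg hA, if_neg hB]
          apply Finset.sum_eq_zero
          intro w hw
          simp only [Finset.mem_Ico] at hw
          by_cases hres : (a + w + 1) % (2 * k) = 0
          · rw [if_pos hres]
            obtain ⟨i, hi⟩ := hform w (by omega) hres
            have hout : (Pfin (2 * k) (w + 1) (a + L)).card = 0 := by
              have hwL : w + 1 ≤ a + L := by omega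
              have hLL : a + L = (w + 1) + (L - 2 - ρ - 2 * k * i) := by omega
              rw [hLL, IH _ (by omega) (w + 1)]
              set L' := L - 2 - ρ - 2 * k * i with hL'
              rw [NF]
              rw [if_neg ?_, if_neg ?_]
              · -- second condition fails : (L' + 2(w+1)) % 2k ≠ 0
                intro hcon
                apply hA
                have e : L' + 2 * (w + 1) = L + (2 * a + 2 + ρ) + 2 * k * i := by omega
                rw [e, hbase] at hcon
                have e2 : L + 2 * k * (a / k + 1) + 2 * k * i
                    = L + 2 * k * (a / k + 1 + i) := by
                  have e3 : 2 * k * (a / k + 1 + i) = 2 * k * (a / k + 1) + 2 * k * i := by ring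
                  omega
                rw [e2, Nat.add_mul_mod_self_left] at hcon
                exact hcon
              · -- first condition fails : L' % 2k ≠ 0
                intro hcon
                apply hB
                have e : L + 2 * a = L' + 2 * k * (a / k + 1 + i) := by
                  have e3 : 2 * k * (a / k + 1 + i) = 2 * k * (a / k + 1) + 2 * k * i := by ring
                  omega
                rw [e, Nat.add_mul_mod_self_left]
                exact hcon
            rw [hout, Nat.mul_zero]
          · rw [if_neg hres]

/-! #### Cyclic to linear transfer -/

lemma mod_small_cases {u m : ℕ} (hm : 0 < m) (h : u < 2 * m) :
    u % m = if u < m then u else u - m := by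
  by_cases h1 : u < m
  · rw [if_pos h1, Nat.mod_eq_of_lt h1]
  · rw [if_neg h1, Nat.mod_eq_sub_mod (by omega), Nat.mod_eq_of_lt (by omega)]

lemma fin_sub_val {m : ℕ} (x y : Fin m) :
    (x - y).val = if y.val ≤ x.val then x.val - y.val else x.val + m - y.val := by
  have hx := x.isLt
  have hy := y.isLt
  have hm : 0 < m := by omega
  rw [Fin.sub_def]
  show (m - y.val + x.val) % m = _
  rw [mod_small_cases hm (by omega)]
  by_cases h : y.val ≤ x.val
  · rw [if_pos h, if_neg (by omega)]
    omega
  · rw [if_neg h, if_pos (by omega)]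
    omega

lemma crossSets_iff_linCross {m : ℕ} (A B : Finset (Fin m)) :
    CrossSets A B ↔ (LinCross (A.image Fin.val) (B.image Fin.val) ∨
      LinCross (B.image Fin.val) (A.image Fin.val)) := by
  constructor
  · rintro ⟨a, hA, a', hA', b, hB, b', hB', ⟨h1a, h1b⟩, ⟨h2a, h2b⟩⟩
    simp only [fin_sub_val] at h1a h1b h2a h2b
    have hva := a.isLt
    have hva' := a'.isLt
    have hvb := b.isLt
    have hvb' := b'.isLt
    have hmemA : a.val ∈ A.image Fin.val := Finset.mem_image_of_mem _ hA
    have hmemA' : a'.val ∈ A.image Fin.val := Finset.mem_image_of_mem _ hA'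
    have hmemB : b.val ∈ B.image Fin.val := Finset.mem_image_of_mem _ hB
    have hmemB' : b'.val ∈ B.image Fin.val := Finset.mem_image_of_mem _ hB'
    have hcases : (a.val < b.val ∧ b.val < a'.val ∧ a'.val < b'.val)
        ∨ (b'.val < a.val ∧ a.val < b.val ∧ b.val < a'.val)
        ∨ (a'.val < b'.val ∧ b'.val < a.val ∧ a.val < b.val)
        ∨ (b.val < a'.val ∧ a'.val < b'.val ∧ b'.val < a.val) := by
      split_ifs at h1a h1b h2a h2b <;> omega
    rcases hcases with ⟨o1, o2, o3⟩ | ⟨o1, o2, o3⟩ | ⟨o1, o2, o3⟩ | ⟨o1, o2, o3⟩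
    · exact Or.inl ⟨a.val, hmemA, a'.val, hmemA', b.val, hmemB, b'.val, hmemB', o1, o2, o3⟩
    · exact Or.inr ⟨b'.val, hmemB', b.val, hmemB, a.val, hmemA, a'.val, hmemA', o1, o2, o3⟩
    · exact Or.inl ⟨a'.val, hmemA', a.val, hmemA, b'.val, hmemB', b.val, hmemB, o1, o2, o3⟩
    · exact Or.inr ⟨b.val, hmemB, b'.val, hmemB', a'.val, hmemA', a.val, hmemA, o1, o2, o3⟩
  · rintro (⟨p, hp, r, hr, q, hq, t, ht, o1, o2, o3⟩ | ⟨p, hp, r, hr, q, hq, t, ht, o1, o2, o3⟩)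
    · obtain ⟨aF, haF, rfl⟩ := Finset.mem_image.mp hp
      obtain ⟨aF', haF', rfl⟩ := Finset.mem_image.mp hr
      obtain ⟨bF, hbF, rfl⟩ := Finset.mem_image.mp hq
      obtain ⟨bF', hbF', rfl⟩ := Finset.mem_image.mp ht
      have h1 := aF.isLt
      have h2 := aF'.isLt
      have h3 := bF.isLt
      have h4 := bF'.isLt
      refine ⟨aF, haF, aF', haF', bF, hbF, bF', hbF', ?_, ?_⟩ <;>
        constructor <;> simp only [fin_sub_val] <;> split_ifs <;> omega
    · obtain ⟨bF, hbF, rfl⟩ := Finset.mem_image.mp hp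
      obtain ⟨bF', hbF', rfl⟩ := Finset.mem_image.mp hr
      obtain ⟨aF, haF, rfl⟩ := Finset.mem_image.mp hq
      obtain ⟨aF', haF', rfl⟩ := Finset.mem_image.mp ht
      have h1 := aF.isLt
      have h2 := aF'.isLt
      have h3 := bF.isLt
      have h4 := bF'.isLt
      refine ⟨aF, haF, aF', haF', bF', hbF', bF, hbF, ?_, ?_⟩ <;>
        constructor <;> simp only [fin_sub_val] <;> split_ifs <;> omega

/-- block-level embedding `Finset (Fin m) ↪ Finset ℕ` -/
def vB (m : ℕ) : Finset (Fin m) ↪ Finset ℕ :=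
  ⟨fun B => B.map Fin.valEmbedding, Finset.map_injective _⟩

/-- structure-level embedding -/
def vP (m : ℕ) : Finset (Finset (Fin m)) ↪ Finset (Finset ℕ) :=
  ⟨fun P => P.map (vB m), Finset.map_injective _⟩

lemma mem_vB {m x} {B : Finset (Fin m)} : x ∈ (vB m) B ↔ ∃ xF ∈ B, xF.val = x := by
  simp [vB, Finset.mem_map, Fin.valEmbedding]

lemma val_mem_vB {m} {xF : Fin m} {B : Finset (Fin m)} : xF.val ∈ (vB m) B ↔ xF ∈ B := by
  rw [mem_vB]
  constructor
  · rintro ⟨yF, hy, hyx⟩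
    rwa [← Fin.val_injective hyx]
  · intro h; exact ⟨xF, h, rfl⟩

lemma card_vB {m} (B : Finset (Fin m)) : ((vB m) B).card = B.card := by
  simp [vB]

lemma mem_vP {m Q} {P : Finset (Finset (Fin m))} :
    Q ∈ (vP m) P ↔ ∃ B ∈ P, (vB m) B = Q := by
  simp [vP, Finset.mem_map]

lemma image_val_eq_vB {m : ℕ} (B : Finset (Fin m)) : B.image Fin.val = (vB m) B := by
  ext x
  rw [Finset.mem_image, mem_vB]

noncomputable def gB (m : ℕ) (hm : 0 < m) (b : Finset ℕ) : Finset (Fin m) :=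
  b.image (fun x => (⟨x % m, Nat.mod_lt x hm⟩ : Fin m))

lemma vB_gB {m : ℕ} (hm : 0 < m) {b : Finset ℕ} (hb : ∀ x ∈ b, x < m) :
    (vB m) (gB m hm b) = b := by
  ext x
  rw [mem_vB]
  constructor
  · rintro ⟨xF, hxF, rfl⟩
    obtain ⟨y, hy, rfl⟩ := Finset.mem_image.mp hxF
    have := hb y hy
    simpa [Nat.mod_eq_of_lt this] using hy
  · intro hx
    refine ⟨⟨x % m, Nat.mod_lt x hm⟩, Finset.mem_image_of_mem _ hx, ?_⟩
    simp [Nat.mod_eq_of_lt (hb x hx)]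

lemma gB_vB {m : ℕ} (hm : 0 < m) (B : Finset (Fin m)) : gB m hm ((vB m) B) = B := by
  ext xF
  rw [gB, Finset.mem_image]
  constructor
  · rintro ⟨y, hy, rfl⟩
    obtain ⟨yF, hyF, rfl⟩ := mem_vB.mp hy
    have : (⟨yF.val % m, Nat.mod_lt yF.val hm⟩ : Fin m) = yF := by
      apply Fin.ext
      simp [Nat.mod_eq_of_lt yF.isLt]
    rwa [this]
  · intro h
    refine ⟨xF.val, val_mem_vB.mpr h, ?_⟩
    apply Fin.ext
    simp [Nat.mod_eq_of_lt xF.isLt]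

noncomputable def gP (m : ℕ) (hm : 0 < m) (Q : Finset (Finset ℕ)) : Finset (Finset (Fin m)) :=
  Q.image (gB m hm)

lemma gP_vP {m : ℕ} (hm : 0 < m) (P : Finset (Finset (Fin m))) : gP m hm ((vP m) P) = P := by
  ext B
  rw [gP, Finset.mem_image]
  constructor
  · rintro ⟨q, hq, rfl⟩
    obtain ⟨B', hB', rfl⟩ := mem_vP.mp hq
    rwa [gB_vB hm]
  · intro h
    exact ⟨(vB m) B, mem_vP.mpr ⟨B, h, rfl⟩, gB_vB hm B⟩

lemma vP_gP {m : ℕ} (hm : 0 < m) {Q : Finset (Finset ℕ)} (hQ : ∀ b ∈ Q, ∀ x ∈ b, x < m) :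
    (vP m) (gP m hm Q) = Q := by
  ext b
  rw [mem_vP]
  constructor
  · rintro ⟨B, hB, rfl⟩
    rw [gP, Finset.mem_image] at hB
    obtain ⟨b', hb', rfl⟩ := hB
    rwa [vB_gB hm (hQ b' hb')]
  · intro hb
    exact ⟨gB m hm b, Finset.mem_image_of_mem _ hb, vB_gB hm (hQ b hb)⟩

lemma IsT_card_n {s a b : ℕ} {P : Finset (Finset ℕ)} (hs : 1 ≤ s) (h : IsT s s a b P) :
    b - a = s * P.card := by
  have hcard : b - a = ∑ B ∈ P, B.card := by
    have h1 : (Finset.Ico a b).card = (P.biUnion id).card := by rw [IsT_biUnion h]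
    rw [Nat.card_Ico] at h1
    rw [h1]
    exact Finset.card_biUnion (fun B hB B' hB' hne => h.2.1 B hB B' hB' hne)
  have hall : ∀ B ∈ P, B.card = s := by
    intro B hB
    rcases Classical.em (a ∈ B) with hm | hm
    · exact (h.2.2.1 B hB).1 hm
    · exact (h.2.2.1 B hB).2 hm
  rw [hcard, Finset.sum_congr rfl hall, Finset.sum_const, smul_eq_mul, Nat.mul_comm]

lemma spider_transfer_fwd {s n : ℕ} (hs : 2 ≤ s) (hn : 1 ≤ n)
    {P : Finset (Finset (Fin (s * n)))} (h : IsSpiderConfig s n P) :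
    IsT s s 0 (s * n) ((vP (s * n)) P) := by
  obtain ⟨hcard, hsz, hdis, hcov, hnc⟩ := h
  refine ⟨fun x => ?_, ?_, ?_, ?_⟩
  · constructor
    · intro hx
      simp only [Finset.mem_Ico] at hx
      obtain ⟨B, hB, hxB⟩ := hcov ⟨x, hx.2⟩
      exact ⟨(vB _) B, mem_vP.mpr ⟨B, hB, rfl⟩, mem_vB.mpr ⟨⟨x, hx.2⟩, hxB, rfl⟩⟩
    · rintro ⟨b, hb, hxb⟩
      obtain ⟨B, hB, rfl⟩ := mem_vP.mp hb
      obtain ⟨xF, hxF, rfl⟩ := mem_vB.mp hxb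
      simp only [Finset.mem_Ico]
      exact ⟨Nat.zero_le _, xF.isLt⟩
  · intro b1 h1 b2 h2 hne
    obtain ⟨B1, hB1, rfl⟩ := mem_vP.mp h1
    obtain ⟨B2, hB2, rfl⟩ := mem_vP.mp h2
    have hBne : B1 ≠ B2 := fun hcon => hne (by rw [hcon])
    rw [Finset.disjoint_left]
    intro x hx1 hx2
    obtain ⟨xF, hxF, rfl⟩ := mem_vB.mp hx1
    have hxF2 := val_mem_vB.mp hx2
    exact (Finset.disjoint_left.mp (hdis B1 hB1 B2 hB2 hBne) hxF) hxF2
  · intro b hb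
    obtain ⟨B, hB, rfl⟩ := mem_vP.mp hb
    rw [card_vB]
    exact ⟨fun _ => hsz B hB, fun _ => hsz B hB⟩
  · intro b1 h1 b2 h2 hne
    obtain ⟨B1, hB1, rfl⟩ := mem_vP.mp h1
    obtain ⟨B2, hB2, rfl⟩ := mem_vP.mp h2
    have hBne : B1 ≠ B2 := fun hcon => hne (by rw [hcon])
    intro hlc
    have : CrossSets B1 B2 := (crossSets_iff_linCross B1 B2).mpr (by
      left
      rw [image_val_eq_vB, image_val_eq_vB]
      exact hlc)
    exact hnc B1 hB1 B2 hB2 hBne this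

lemma spider_transfer_bwd {s n : ℕ} (hs : 2 ≤ s) (hn : 1 ≤ n)
    {Q : Finset (Finset ℕ)} (hQ : IsT s s 0 (s * n) Q) :
    IsSpiderConfig s n (gP (s * n) (by positivity) Q) := by
  have hm : 0 < s * n := by positivity
  have helem : ∀ b ∈ Q, ∀ x ∈ b, x < s * n := by
    intro b hb x hx
    have := (hQ.1 x).mpr ⟨b, hb, hx⟩
    simpa [Finset.mem_Ico] using this
  have hround : ∀ b ∈ Q, (vB (s * n)) (gB (s * n) hm b) = b :=
    fun b hb => vB_gB hm (helem b hb)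
  have hinj : ∀ b1 ∈ Q, ∀ b2 ∈ Q, gB (s * n) hm b1 = gB (s * n) hm b2 → b1 = b2 := by
    intro b1 h1 b2 h2 heq
    rw [← hround b1 h1, ← hround b2 h2, heq]
  have hmemg : ∀ B ∈ gP (s * n) hm Q, ∃ b ∈ Q, gB (s * n) hm b = B ∧ (vB (s * n)) B = b := by
    intro B hB
    obtain ⟨b, hb, rfl⟩ := Finset.mem_image.mp hB
    exact ⟨b, hb, rfl, hround b hb⟩
  refine ⟨?_, ?_, ?_, ?_, ?_⟩
  · -- card = n
    have h1 : (gP (s * n) hm Q).card = Q.card := by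
      rw [gP]
      apply Finset.card_image_of_injOn
      intro b1 h1 b2 h2
      exact hinj b1 h1 b2 h2
    have h2 : s * n - 0 = s * Q.card := IsT_card_n (by omega) hQ
    have : s * n = s * Q.card := by omega
    have := Nat.eq_of_mul_eq_mul_left (by omega : 0 < s) this
    rw [h1, ← this]
  · intro B hB
    obtain ⟨b, hb, rfl, hvb⟩ := hmemg B hB
    have : ((vB (s * n)) (gB (s * n) hm b)).card = (gB (s * n) hm b).card := card_vB _
    rw [hvb] at this
    rw [← this]
    rcases Classical.em (0 ∈ b) with hm0 | hm0
    · exact (hQ.2.2.1 b hb).1 hm0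
    · exact (hQ.2.2.1 b hb).2 hm0
  · intro B hB B' hB' hne
    obtain ⟨b, hb, rfl, hvb⟩ := hmemg B hB
    obtain ⟨b', hb', rfl, hvb'⟩ := hmemg B' hB'
    have hbne : b ≠ b' := fun hcon => hne (by rw [hcon])
    rw [Finset.disjoint_left]
    intro xF hx1 hx2
    have hd := hQ.2.1 b hb b' hb' hbne
    have h1 : xF.val ∈ b := by
      rw [← hvb]
      exact val_mem_vB.mpr hx1
    have h2 : xF.val ∈ b' := by
      rw [← hvb']
      exact val_mem_vB.mpr hx2
    exact (Finset.disjoint_left.mp hd h1) h2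
  · intro xF
    obtain ⟨b, hb, hxb⟩ := (hQ.1 xF.val).mp
      (by simp only [Finset.mem_Ico]; exact ⟨Nat.zero_le _, xF.isLt⟩)
    refine ⟨gB (s * n) hm b, Finset.mem_image_of_mem _ hb, ?_⟩
    have := hround b hb
    rw [← val_mem_vB, this]
    exact hxb
  · intro B hB B' hB' hne
    obtain ⟨b, hb, rfl, hvb⟩ := hmemg B hB
    obtain ⟨b', hb', rfl, hvb'⟩ := hmemg B' hB'
    have hbne : b ≠ b' := fun hcon => hne (by rw [hcon])
    intro hcs
    have e1 : (gB (s * n) hm b).image Fin.val = b := by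
      rw [image_val_eq_vB, hvb]
    have e2 : (gB (s * n) hm b').image Fin.val = b' := by
      rw [image_val_eq_vB, hvb']
    rcases (crossSets_iff_linCross _ _).mp hcs with hlc | hlc
    · apply hQ.2.2.2 b hb b' hb' hbne
      rwa [e1, e2] at hlc
    · apply hQ.2.2.2 b' hb' b hb (Ne.symm hbne)
      rwa [e1, e2] at hlc

lemma spider_card {s n : ℕ} (hs : 2 ≤ s) (hn : 1 ≤ n) :
    Nat.card {P : Finset (Finset (Fin (s * n))) // IsSpiderConfig s n P}
      = (Tfin s s 0 (s * n)).card := by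
  have hm : 0 < s * n := by positivity
  have e : {P : Finset (Finset (Fin (s * n))) // IsSpiderConfig s n P}
      ≃ {Q // Q ∈ Tfin s s 0 (s * n)} := by
    refine ⟨fun P => ⟨(vP (s * n)) P.1, mem_Tfin.mpr (spider_transfer_fwd hs hn P.2)⟩,
      fun Q => ⟨gP (s * n) hm Q.1, spider_transfer_bwd hs hn (mem_Tfin.mp Q.2)⟩, ?_, ?_⟩
    · intro P
      apply Subtype.ext
      exact gP_vP hm P.1
    · intro Q
      apply Subtype.ext
      have h := mem_Tfin.mp Q.2
      apply vP_gP hm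
      intro b hb x hx
      have := (h.1 x).mpr ⟨b, hb, hx⟩
      simpa [Finset.mem_Ico] using this
  rw [Nat.card_congr e, Nat.card_eq_finsetCard]

lemma ptColor_norm {s : ℕ} (hs : 2 ≤ s) (p : ℕ) :
    ptColor s p = (if p % (2 * (s - 1)) < s - 1 then p % (2 * (s - 1)) + 1
      else 2 * (s - 1) - p % (2 * (s - 1))) := by
  set k := s - 1 with hk
  have hk1 : 1 ≤ k := by omega
  set α := p % (2 * k) with hα
  have hαlt : α < 2 * k := Nat.mod_lt _ (by omega)
  have hp := Nat.div_add_mod p (2 * k)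
  have hαk := Nat.div_add_mod α k
  have hαmk : α % k < k := Nat.mod_lt _ (by omega)
  have edec : p = k * (2 * (p / (2 * k)) + α / k) + α % k := by
    have e2 : k * (2 * (p / (2 * k)) + α / k) = 2 * k * (p / (2 * k)) + k * (α / k) := by ring
    omega
  have hmodk : p % k = α % k := (mod_decomp hαmk edec).1
  have hdivk : p / k = 2 * (p / (2 * k)) + α / k := (mod_decomp hαmk edec).2
  have hαdk : α / k = if α < k then 0 else 1 := by
    by_cases h : α < k
    · rw [if_pos h, Nat.div_eq_of_lt h]
    · rw [if_neg h]
      have h1 : 1 ≤ α / k := (Nat.one_le_div_iff (by omega)).mpr (by omega)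
      have h2 : α / k < 2 := Nat.div_lt_of_lt_mul (by omega : α < k * 2)
      omega
  have hpar : (p / k) % 2 = α / k := by
    rw [hdivk]
    by_cases h : α < k
    · rw [hαdk, if_pos h, Nat.add_zero]
      exact Nat.mul_mod_right 2 _
    · rw [hαdk, if_neg h]
      have e : 2 * (p / (2 * k)) + 1 = 1 + (p / (2 * k)) * 2 := by ring
      rw [e, Nat.add_mul_mod_self_right]
  rw [ptColor, ← hk]
  by_cases h : α < k
  · have hc : (p / k) % 2 = 0 := by rw [hpar, hαdk, if_pos h]
    rw [if_pos hc, if_pos h, hmodk, Nat.mod_eq_of_lt h]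
  · have hc : ¬ ((p / k) % 2 = 0) := by
      rw [hpar, hαdk, if_neg h]
      omega
    rw [if_neg hc, if_neg h, hmodk]
    have hαmod : α % k = α - k := (mod_decomp (by omega) (by omega : α = k * 1 + (α - k))).1
    omega

lemma ptColor_eq_iff {s : ℕ} (hs : 2 ≤ s) (a b : ℕ) :
    ptColor s a = ptColor s b
      ↔ (a % (2 * (s - 1)) = b % (2 * (s - 1)) ∨ (a + b + 1) % (2 * (s - 1)) = 0) := by
  set k := s - 1 with hk
  have hk1 : 1 ≤ k := by omega
  rw [ptColor_norm hs a, ptColor_norm hs b]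
  set α := a % (2 * k) with hα
  set β := b % (2 * k) with hβ
  have hαlt : α < 2 * k := Nat.mod_lt _ (by omega)
  have hβlt : β < 2 * k := Nat.mod_lt _ (by omega)
  have hsum : (a + b + 1) % (2 * k) = 0 ↔ α + β + 1 = 2 * k := by
    have ha := Nat.div_add_mod a (2 * k)
    have hb := Nat.div_add_mod b (2 * k)
    have e : a + b + 1 = (α + β + 1) + 2 * k * (a / (2 * k) + b / (2 * k)) := by
      have e2 : 2 * k * (a / (2 * k) + b / (2 * k))
          = 2 * k * (a / (2 * k)) + 2 * k * (b / (2 * k)) := by ring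
      omega
    constructor
    · intro h
      rw [e, Nat.add_mul_mod_self_left] at h
      obtain ⟨d, hd⟩ : ∃ d, α + β + 1 = 2 * k * d :=
        ⟨(α + β + 1) / (2 * k), by have := Nat.div_add_mod (α + β + 1) (2 * k); omega⟩
      have hd2 : d < 2 := by
        by_contra hc
        have : 2 * k * 2 ≤ 2 * k * d := Nat.mul_le_mul_left _ (by omega)
        omega
      interval_cases d <;> omega
    · intro h
      rw [e, h]
      have e3 : 2 * k + 2 * k * (a / (2 * k) + b / (2 * k))
          = 2 * k * (1 + (a / (2 * k) + b / (2 * k))) := by ring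
      rw [e3]
      exact Nat.mul_mod_right _ _
  rw [hsum]
  split_ifs <;> constructor <;> intro hyp <;> omega

lemma pairing_sum_cond {s n : ℕ} (hs : 2 ≤ s) (hn : 1 ≤ n)
    {M : Finset (Finset (Fin (2 * (s - 1) * n)))} (hM : IsPairing s n M)
    {e : Finset (Fin (2 * (s - 1) * n))} (he : e ∈ M) {aF bF : Fin (2 * (s - 1) * n)}
    (heq : e = {aF, bF}) (hne : aF ≠ bF) (hcol : ptColor s aF.val = ptColor s bF.val) :
    (aF.val + bF.val + 1) % (2 * (s - 1)) = 0 := by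
  -- reduce to the case aF.val < bF.val
  have main : ∀ (cF dF : Fin (2 * (s - 1) * n)), e = {cF, dF} → cF.val < dF.val →
      ptColor s cF.val = ptColor s dF.val →
      (cF.val + dF.val + 1) % (2 * (s - 1)) = 0 := by
    intro cF dF heq' hlt hcol'
    -- the between set
    set S : Finset (Fin (2 * (s - 1) * n)) :=
      Finset.univ.filter (fun x => cF.val < x.val ∧ x.val < dF.val) with hS
    have hSmem : ∀ x : Fin (2 * (s - 1) * n), x ∈ S ↔ (cF.val < x.val ∧ x.val < dF.val) := by
      intro x
      simp [hS]
    -- every chord meeting S lies in S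
    have hchordS : ∀ e' ∈ M, ∀ x ∈ e', (x ∈ S) → ∀ y ∈ e', y ∈ S := by
      intro e' he' x hxe hxS y hye
      rw [hSmem] at hxS ⊢
      by_contra hyS
      have hxne : x ∉ e := by
        rw [heq']
        intro hcon
        simp at hcon
        rcases hcon with rfl | rfl <;> omega
      have hene : e' ≠ e := fun hcon => hxne (hcon ▸ hxe)
      have hdisj := hM.2.1 e' he' e he hene
      have hyne : y ∉ e := Finset.disjoint_left.mp hdisj hye
      have hyc : y ≠ cF := fun hcon => hyne (by rw [heq', hcon]; simp)
      have hyd : y ≠ dF := fun hcon => hyne (by rw [heq', hcon]; simp)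
      have hycv : y.val ≠ cF.val := fun hcon => hyc (Fin.val_injective hcon)
      have hydv : y.val ≠ dF.val := fun hcon => hyd (Fin.val_injective hcon)
      have hcin : cF ∈ e := by rw [heq']; simp
      have hdin : dF ∈ e := by rw [heq']; simp
      rcases Nat.lt_or_ge y.val cF.val with hcase | hcase
      · -- y < c < x < d : e' crosses e
        apply hM.2.2.2 e' he' e he hene
        apply (crossSets_iff_linCross e' e).mpr
        left
        exact ⟨y.val, Finset.mem_image_of_mem _ hye, x.val, Finset.mem_image_of_mem _ hxe,
          cF.val, Finset.mem_image_of_mem _ hcin, dF.val, Finset.mem_image_of_mem _ hdin,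
          by omega, by omega, by omega⟩
      · have hyd2 : dF.val < y.val := by omega
        apply hM.2.2.2 e he e' he' (fun hcon => hene hcon.symm)
        apply (crossSets_iff_linCross e e').mpr
        left
        exact ⟨cF.val, Finset.mem_image_of_mem _ hcin, dF.val, Finset.mem_image_of_mem _ hdin,
          x.val, Finset.mem_image_of_mem _ hxe, y.val, Finset.mem_image_of_mem _ hye,
          by omega, by omega, by omega⟩
    -- S is a disjoint union of chords
    have hSbi : S = (M.filter (fun e' => ∀ x ∈ e', x ∈ S)).biUnion id := by
      ext x
      rw [Finset.mem_biUnion]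
      constructor
      · intro hx
        obtain ⟨e', he', hxe⟩ := hM.2.2.1 x
        exact ⟨e', Finset.mem_filter.mpr ⟨he', hchordS e' he' x hxe hx⟩, hxe⟩
      · rintro ⟨e', he', hxe⟩
        exact (Finset.mem_filter.mp he').2 x hxe
    have hScard_even : ∃ r, S.card = 2 * r := by
      refine ⟨(M.filter (fun e' => ∀ x ∈ e', x ∈ S)).card, ?_⟩
      have hcb : S.card = ∑ e' ∈ M.filter (fun e' => ∀ x ∈ e', x ∈ S), (id e').card := by
        conv_lhs => rw [hSbi]
        exact Finset.card_biUnion (fun e1 h1 e2 h2 hne12 =>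
          hM.2.1 e1 (Finset.mem_of_mem_filter _ h1) e2 (Finset.mem_of_mem_filter _ h2) hne12)
      have hall : ∀ e' ∈ M.filter (fun e' => ∀ x ∈ e', x ∈ S), (id e').card = 2 := by
        intro e' he'
        obtain ⟨c, d, hcd, hnecd, _⟩ := hM.1 e' (Finset.mem_of_mem_filter _ he')
        show e'.card = 2
        rw [hcd]
        exact Finset.card_pair hnecd
      rw [hcb, Finset.sum_congr rfl hall, Finset.sum_const, smul_eq_mul, Nat.mul_comm]
    have hScard : S.card = dF.val - cF.val - 1 := by
      rw [← Nat.card_Ioo]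
      apply Finset.card_bij (fun x _ => x.val)
      · intro x hx
        rw [hSmem] at hx
        simp [Finset.mem_Ioo]
        omega
      · intro x1 h1 x2 h2 heq12
        exact Fin.val_injective heq12
      · intro y hy
        simp only [Finset.mem_Ioo] at hy
        have hym : y < 2 * (s - 1) * n := by
          have := dF.isLt
          omega
        exact ⟨⟨y, hym⟩, (hSmem _).mpr (by simp; omega), rfl⟩
    -- conclude oddness, then the sum condition
    rcases (ptColor_eq_iff hs cF.val dF.val).mp hcol' with hmod | hsum
    · exfalso
      -- 2(s-1) divides the (even) difference, but the difference is odd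
      obtain ⟨r, hr⟩ := hScard_even
      have hd1 : cF.val % (2 * (s - 1)) = dF.val % (2 * (s - 1)) := hmod
      obtain ⟨q, hq⟩ : ∃ q, dF.val - cF.val = 2 * (s - 1) * q := by
        have h1 := Nat.div_add_mod cF.val (2 * (s - 1))
        have h2 := Nat.div_add_mod dF.val (2 * (s - 1))
        refine ⟨dF.val / (2 * (s - 1)) - cF.val / (2 * (s - 1)), ?_⟩
        have h3 : cF.val / (2 * (s - 1)) ≤ dF.val / (2 * (s - 1)) := by
          by_contra hcon
          have : 2 * (s - 1) * (dF.val / (2 * (s - 1)) + 1)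
              ≤ 2 * (s - 1) * (cF.val / (2 * (s - 1))) := Nat.mul_le_mul_left _ (by omega)
          have e4 : 2 * (s - 1) * (dF.val / (2 * (s - 1)) + 1)
              = 2 * (s - 1) * (dF.val / (2 * (s - 1))) + 2 * (s - 1) := by ring
          omega
        have e5 : 2 * (s - 1) * (dF.val / (2 * (s - 1)) - cF.val / (2 * (s - 1)))
            + 2 * (s - 1) * (cF.val / (2 * (s - 1)))
            = 2 * (s - 1) * (dF.val / (2 * (s - 1))) := by
          rw [← Nat.mul_add]
          congr 1
          omega
        omega
      have e6 : 2 * (s - 1) * q = 2 * ((s - 1) * q) := by ring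
      omega
    · exact hsum
  rcases Nat.lt_or_ge aF.val bF.val with h | h
  · exact main aF bF heq h hcol
  · have hlt : bF.val < aF.val := by
      rcases Nat.lt_or_ge bF.val aF.val with h2 | h2
      · exact h2
      · exfalso
        exact hne (Fin.val_injective (by omega))
    have := main bF aF (by rw [heq, Finset.pair_comm]) hlt hcol.symm
    have e : bF.val + aF.val = aF.val + bF.val := by omega
    rwa [e] at this

lemma vB_pair {m : ℕ} (aF bF : Fin m) : (vB m) {aF, bF} = {aF.val, bF.val} := by
  ext x
  rw [mem_vB]
  constructor
  · rintro ⟨xF, hxF, rfl⟩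
    simp at hxF
    rcases hxF with rfl | rfl <;> simp
  · intro hx
    simp at hx
    rcases hx with rfl | rfl
    · exact ⟨aF, by simp, rfl⟩
    · exact ⟨bF, by simp, rfl⟩

lemma pairing_transfer_fwd {s n : ℕ} (hs : 2 ≤ s) (hn : 1 ≤ n)
    {M : Finset (Finset (Fin (2 * (s - 1) * n)))} (h : IsPairing s n M) :
    IsPr (2 * (s - 1)) 0 (2 * (s - 1) * n) ((vP (2 * (s - 1) * n)) M) := by
  refine ⟨?_, fun x => ?_, ?_, ?_⟩
  · intro b hb
    obtain ⟨e, he, rfl⟩ := mem_vP.mp hb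
    obtain ⟨aF, bF, heq, hne, hcol⟩ := h.1 e he
    have hsum := pairing_sum_cond hs hn h he heq hne hcol
    rcases Nat.lt_or_ge aF.val bF.val with hlt | hge
    · refine ⟨aF.val, ?_, bF.val, ?_, hlt, hsum, ?_⟩
      · rw [heq]; exact val_mem_vB.mpr (by simp)
      · rw [heq]; exact val_mem_vB.mpr (by simp)
      · rw [heq, vB_pair]
    · have hlt : bF.val < aF.val := by
        rcases Nat.lt_or_ge bF.val aF.val with h2 | h2
        · exact h2
        · exact absurd (Fin.val_injective (by omega)) hne
      refine ⟨bF.val, ?_, aF.val, ?_, hlt, by rw [Nat.add_comm bF.val aF.val]; exact hsum, ?_⟩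
      · rw [heq]; exact val_mem_vB.mpr (by simp)
      · rw [heq]; exact val_mem_vB.mpr (by simp)
      · rw [heq, vB_pair, Finset.pair_comm]
  · constructor
    · intro hx
      simp only [Finset.mem_Ico] at hx
      obtain ⟨e, he, hxe⟩ := h.2.2.1 ⟨x, hx.2⟩
      exact ⟨(vB _) e, mem_vP.mpr ⟨e, he, rfl⟩, mem_vB.mpr ⟨⟨x, hx.2⟩, hxe, rfl⟩⟩
    · rintro ⟨b, hb, hxb⟩
      obtain ⟨e, he, rfl⟩ := mem_vP.mp hb
      obtain ⟨xF, hxF, rfl⟩ := mem_vB.mp hxb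
      simp only [Finset.mem_Ico]
      exact ⟨Nat.zero_le _, xF.isLt⟩
  · intro b1 h1 b2 h2 hne
    obtain ⟨e1, he1, rfl⟩ := mem_vP.mp h1
    obtain ⟨e2, he2, rfl⟩ := mem_vP.mp h2
    have hene : e1 ≠ e2 := fun hcon => hne (by rw [hcon])
    rw [Finset.disjoint_left]
    intro x hx1 hx2
    obtain ⟨xF, hxF, rfl⟩ := mem_vB.mp hx1
    exact (Finset.disjoint_left.mp (h.2.1 e1 he1 e2 he2 hene) hxF) (val_mem_vB.mp hx2)
  · intro b1 h1 b2 h2 hne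
    obtain ⟨e1, he1, rfl⟩ := mem_vP.mp h1
    obtain ⟨e2, he2, rfl⟩ := mem_vP.mp h2
    have hene : e1 ≠ e2 := fun hcon => hne (by rw [hcon])
    intro hlc
    apply h.2.2.2 e1 he1 e2 he2 hene
    apply (crossSets_iff_linCross e1 e2).mpr
    left
    rwa [image_val_eq_vB, image_val_eq_vB]

lemma pairing_transfer_bwd {s n : ℕ} (hs : 2 ≤ s) (hn : 1 ≤ n)
    {Q : Finset (Finset ℕ)} (hQ : IsPr (2 * (s - 1)) 0 (2 * (s - 1) * n) Q) :
    IsPairing s n (gP (2 * (s - 1) * n) (Nat.mul_pos (by omega : 0 < 2 * (s - 1)) hn) Q) := by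
  have hm : 0 < 2 * (s - 1) * n := Nat.mul_pos (by omega : 0 < 2 * (s - 1)) hn
  have helem : ∀ b ∈ Q, ∀ x ∈ b, x < 2 * (s - 1) * n := by
    intro b hb x hx
    have := (hQ.2.1 x).mpr ⟨b, hb, hx⟩
    simpa [Finset.mem_Ico] using this
  have hround : ∀ b ∈ Q, (vB (2 * (s - 1) * n)) (gB (2 * (s - 1) * n) hm b) = b :=
    fun b hb => vB_gB hm (helem b hb)
  have hmemg : ∀ e ∈ gP (2 * (s - 1) * n) hm Q,
      ∃ b ∈ Q, gB (2 * (s - 1) * n) hm b = e ∧ (vB (2 * (s - 1) * n)) e = b := by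
    intro e he
    obtain ⟨b, hb, rfl⟩ := Finset.mem_image.mp he
    exact ⟨b, hb, rfl, hround b hb⟩
  refine ⟨?_, ?_, ?_, ?_⟩
  · intro e he
    obtain ⟨b, hb, hgb, hvb⟩ := hmemg e he
    obtain ⟨x, hxb, y, hyb, hxy, hsum, hbxy⟩ := hQ.1 b hb
    have hxm := helem b hb x hxb
    have hym := helem b hb y hyb
    refine ⟨⟨x, hxm⟩, ⟨y, hym⟩, ?_, ?_, ?_⟩
    · rw [← hgb, hbxy]
      rw [gB]
      rw [Finset.image_insert, Finset.image_singleton]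
      congr 1
      · exact Fin.ext (by simp [Nat.mod_eq_of_lt hxm])
      · congr 1
        exact Fin.ext (by simp [Nat.mod_eq_of_lt hym])
    · intro hcon
      have : x = y := congrArg Fin.val hcon
      omega
    · show ptColor s x = ptColor s y
      exact (ptColor_eq_iff hs x y).mpr (Or.inr hsum)
  · intro e1 h1 e2 h2 hne
    obtain ⟨b1, hb1, hg1, hv1⟩ := hmemg e1 h1
    obtain ⟨b2, hb2, hg2, hv2⟩ := hmemg e2 h2
    have hbne : b1 ≠ b2 := by
      intro hcon
      apply hne
      rw [← hg1, ← hg2, hcon]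
    rw [Finset.disjoint_left]
    intro xF hx1 hx2
    have hh1 : xF.val ∈ b1 := by rw [← hv1]; exact val_mem_vB.mpr hx1
    have hh2 : xF.val ∈ b2 := by rw [← hv2]; exact val_mem_vB.mpr hx2
    exact (Finset.disjoint_left.mp (hQ.2.2.1 b1 hb1 b2 hb2 hbne) hh1) hh2
  · intro xF
    obtain ⟨b, hb, hxb⟩ := (hQ.2.1 xF.val).mp
      (by simp only [Finset.mem_Ico]; exact ⟨Nat.zero_le _, xF.isLt⟩)
    refine ⟨gB (2 * (s - 1) * n) hm b, Finset.mem_image_of_mem _ hb, ?_⟩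
    rw [← val_mem_vB, hround b hb]
    exact hxb
  · intro e1 h1 e2 h2 hne
    obtain ⟨b1, hb1, hg1, hv1⟩ := hmemg e1 h1
    obtain ⟨b2, hb2, hg2, hv2⟩ := hmemg e2 h2
    have hbne : b1 ≠ b2 := by
      intro hcon
      apply hne
      rw [← hg1, ← hg2, hcon]
    intro hcs
    have e1v : e1.image Fin.val = b1 := by rw [image_val_eq_vB, hv1]
    have e2v : e2.image Fin.val = b2 := by rw [image_val_eq_vB, hv2]
    rcases (crossSets_iff_linCross _ _).mp hcs with hlc | hlc
    · apply hQ.2.2.2 b1 hb1 b2 hb2 hbne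
      rwa [e1v, e2v] at hlc
    · apply hQ.2.2.2 b2 hb2 b1 hb1 (Ne.symm hbne)
      rwa [e1v, e2v] at hlc

lemma pairing_card {s n : ℕ} (hs : 2 ≤ s) (hn : 1 ≤ n) :
    Nat.card {M : Finset (Finset (Fin (2 * (s - 1) * n))) // IsPairing s n M}
      = (Pfin (2 * (s - 1)) 0 (2 * (s - 1) * n)).card := by
  have hm : 0 < 2 * (s - 1) * n := Nat.mul_pos (by omega : 0 < 2 * (s - 1)) hn
  have e : {M : Finset (Finset (Fin (2 * (s - 1) * n))) // IsPairing s n M}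
      ≃ {Q // Q ∈ Pfin (2 * (s - 1)) 0 (2 * (s - 1) * n)} := by
    refine ⟨fun M => ⟨(vP (2 * (s - 1) * n)) M.1, mem_Pfin.mpr (pairing_transfer_fwd hs hn M.2)⟩,
      fun Q => ⟨gP (2 * (s - 1) * n) hm Q.1, pairing_transfer_bwd hs hn (mem_Pfin.mp Q.2)⟩,
      ?_, ?_⟩
    · intro M
      apply Subtype.ext
      exact gP_vP hm M.1
    · intro Q
      apply Subtype.ext
      have h := mem_Pfin.mp Q.2
      apply vP_gP hm
      intro b hb x hx
      have := (h.2.1 x).mpr ⟨b, hb, hx⟩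
      simpa [Finset.mem_Ico] using this
  rw [Nat.card_congr e, Nat.card_eq_finsetCard]

/-! #### Conclusion -/

theorem card_eq {s n : ℕ} (hs : 2 ≤ s) (hn : 1 ≤ n) :
    Nat.card {M : Finset (Finset (Fin (2 * (s - 1) * n))) // IsPairing s n M}
      = Nat.card {P : Finset (Finset (Fin (s * n))) // IsSpiderConfig s n P} := by
  have hk : (s - 1) + 1 = s := by omega
  rw [spider_card hs hn, pairing_card hs hn]
  have h1 : 2 * (s - 1) * n = 0 + 2 * (s - 1) * n := by ring
  rw [h1, master hs hk (2 * (s - 1) * n) 0]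
  have h2 : (2 * (s - 1) * n) % (2 * (s - 1)) = 0 := by
    exact Nat.mul_mod_right _ _
  have h3 : (2 * (s - 1) * n) / (2 * (s - 1)) = n := by
    refine Nat.mul_div_cancel_left _ (by omega)
  rw [NF, if_pos h2, h3]
  rfl

end SpiderBij

/-- There is a bijection between `F'(s,n)`, the set of color-respecting
non-crossing perfect matchings of `2(s-1)n` colored cyclic points, and `F(s,n)`, the set
of partitions of `sn` cyclic points into `n` pairwise non-crossing blocks of size `s`;
in particular `|F'(s,n)| = |F(s,n)|`. -/
theorem pairing_equiv_spiderConfig (s n : ℕ) (hs : 2 ≤ s) (hn : 1 ≤ n) :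
    Nonempty
      ({M : Finset (Finset (Fin (2 * (s - 1) * n))) // IsPairing s n M} ≃
        {P : Finset (Finset (Fin (s * n))) // IsSpiderConfig s n P}) ∧
    {M : Finset (Finset (Fin (2 * (s - 1) * n))) | IsPairing s n M}.ncard =
      {P : Finset (Finset (Fin (s * n))) | IsSpiderConfig s n P}.ncard := by
  classical
  have hcard := SpiderBij.card_eq hs hn
  constructor
  · haveI : Fintype {M : Finset (Finset (Fin (2 * (s - 1) * n))) // IsPairing s n M} :=
      Fintype.ofFinite _
    haveI : Fintype {P : Finset (Finset (Fin (s * n))) // IsSpiderConfig s n P} :=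
      Fintype.ofFinite _
    exact ⟨Fintype.equivOfCardEq (by
      rw [← Nat.card_eq_fintype_card, ← Nat.card_eq_fintype_card]; exact hcard)⟩
  · have h1 := Nat.card_coe_set_eq {M : Finset (Finset (Fin (2 * (s - 1) * n))) | IsPairing s n M}
    have h2 := Nat.card_coe_set_eq {P : Finset (Finset (Fin (s * n))) | IsSpiderConfig s n P}
    rw [← h1, ← h2]
    exact hcard
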